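/- arXiv:2106.12463 — 7 statements merged into one kernel-verified Lean document; each statement's English description precedes it below -/
import Mathlib

section
/- Let (C_i)_{i=1}^n be Kraus operators of a channel C on ℂ^d and (α_i)_{i=1}^n amplitudes with ∑|α_i|²=1. Then there exists an alternative Kraus representation (K'_j)_{j=1}^n of the controlled channel ∑_i K_i ρ K_i† (with K_i = α_i|0⟩⟨0|⊗I + |1⟩⟨1|⊗C_i) in which K'_1 = |0⟩⟨0|⊗I + |1⟩⟨1|⊗C'_1 and K'_j = |1⟩⟨1|⊗C'_j for j≥2, where (C'_j)_{j=1}^n is a Kraus representation of C obtained from (C_i) by a unitary matrix. -/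
open Matrix Kronecker

set_option maxRecDepth 4000
set_option maxHeartbeats 1000000

noncomputable section

/-- The controlled Kraus operator `α • (|0⟩⟨0| ⊗ I) + |1⟩⟨1| ⊗ C` on `ℂ² ⊗ ℂ^d`. -/
def ctrlOp {d : ℕ} (α : ℂ) (C : Matrix (Fin d) (Fin d) ℂ) :
    Matrix (Fin 2 × Fin d) (Fin 2 × Fin d) ℂ :=
  α • (Matrix.single (0 : Fin 2) 0 (1:ℂ) ⊗ₖ (1 : Matrix (Fin d) (Fin d) ℂ))
    + Matrix.single (1 : Fin 2) 1 (1:ℂ) ⊗ₖ C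

/-- Mixing Kraus operators by a matrix `V` with `Vᴴ V = 1` does not change the channel. -/
lemma mix_lemma {m : ℕ} {I : Type*} [Fintype I]
    (V : Matrix (Fin m) (Fin m) ℂ) (hV : Vᴴ * V = 1)
    (K : Fin m → Matrix I I ℂ) (ρ : Matrix I I ℂ) :
    ∑ j, (∑ i, V j i • K i) * ρ * (∑ i, V j i • K i)ᴴ
      = ∑ i, K i * ρ * (K i)ᴴ := by
  have key : ∀ i k : Fin m, ∑ j, V j i * (starRingEnd ℂ) (V j k) = if k = i then 1 else 0 := by
    intro i k
    have := congrFun (congrFun hV k) i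
    simp only [Matrix.mul_apply, Matrix.conjTranspose_apply, Matrix.one_apply] at this
    rw [← this]
    exact Finset.sum_congr rfl fun j _ => mul_comm _ _
  calc ∑ j, (∑ i, V j i • K i) * ρ * (∑ i, V j i • K i)ᴴ
      = ∑ j, ∑ i, ∑ k, (V j i * (starRingEnd ℂ) (V j k)) • (K i * ρ * (K k)ᴴ) := by
        refine Finset.sum_congr rfl fun j _ => ?_
        simp only [Matrix.conjTranspose_sum, Matrix.conjTranspose_smul, Matrix.sum_mul,
          Matrix.mul_sum, Matrix.smul_mul, Matrix.mul_smul, smul_smul, Finset.smul_sum]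
        rw [Finset.sum_comm]
        refine Finset.sum_congr rfl fun i _ => Finset.sum_congr rfl fun k _ => ?_
        rw [mul_comm]
        rfl
    _ = ∑ i, ∑ k, (∑ j, V j i * (starRingEnd ℂ) (V j k)) • (K i * ρ * (K k)ᴴ) := by
        rw [Finset.sum_comm]
        refine Finset.sum_congr rfl fun i _ => ?_
        rw [Finset.sum_comm]
        refine Finset.sum_congr rfl fun k _ => ?_
        rw [Finset.sum_smul]
    _ = ∑ i, K i * ρ * (K i)ᴴ := by
        refine Finset.sum_congr rfl fun i _ => ?_
        simp [key]

/-- the controlled channel built from Kraus operators `C i` and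
amplitudes `α i` admits an alternative Kraus representation, obtained from the
original one by a unitary matrix, in which only the first Kraus operator is
coherent with the identity. -/
theorem ctrl_channel_canonical_form {d n : ℕ}
    (C : Fin (n+1) → Matrix (Fin d) (Fin d) ℂ) (α : Fin (n+1) → ℂ)
    (hC : ∑ i, (C i)ᴴ * C i = 1)
    (hα : ∑ i, ‖α i‖ ^ 2 = (1 : ℝ)) :
    ∃ V ∈ Matrix.unitaryGroup (Fin (n+1)) ℂ,
      ∃ C' : Fin (n+1) → Matrix (Fin d) (Fin d) ℂ,
        (∀ j, C' j = ∑ i, V j i • C i) ∧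
        (∑ j, (C' j)ᴴ * C' j = 1) ∧
        (∀ ρ : Matrix (Fin d) (Fin d) ℂ,
          ∑ j, C' j * ρ * (C' j)ᴴ = ∑ i, C i * ρ * (C i)ᴴ) ∧
        (∀ ρ : Matrix (Fin 2 × Fin d) (Fin 2 × Fin d) ℂ,
          ∑ j, ctrlOp (if j = 0 then (1:ℂ) else 0) (C' j) * ρ
               * (ctrlOp (if j = 0 then (1:ℂ) else 0) (C' j))ᴴ
            = ∑ i, ctrlOp (α i) (C i) * ρ * (ctrlOp (α i) (C i))ᴴ) := by
  have hex : ∃ V ∈ Matrix.unitaryGroup (Fin (n+1)) ℂ,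
      ∀ j, ∑ i, V j i * α i = if j = 0 then (1:ℂ) else 0 := by
    set v : EuclideanSpace ℂ (Fin (n+1)) := (WithLp.equiv 2 _).symm α with hv
    have hnorm : ‖v‖ = 1 := by
      rw [EuclideanSpace.norm_eq]
      have : ∀ i, ‖v i‖ = ‖α i‖ := fun i => rfl
      simp only [this, hα, Real.sqrt_one]
    have horth : Orthonormal ℂ (({0} : Set (Fin (n+1))).restrict (fun _ => v)) := by
      rw [orthonormal_iff_ite]
      rintro ⟨i, hi⟩ ⟨j, hj⟩
      simp only [Set.mem_singleton_iff] at hi hj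
      subst hi; subst hj
      simp [Set.restrict, inner_self_eq_norm_sq_to_K, hnorm]
    obtain ⟨b, hb⟩ := horth.exists_orthonormalBasis_extension_of_card_eq
      (by simp) (v := fun _ => v)
    have hb0 : b 0 = v := hb 0 rfl
    set V : Matrix (Fin (n+1)) (Fin (n+1)) ℂ :=
      Matrix.of (fun j i => (starRingEnd ℂ) (b j i)) with hVdef
    have hbo := orthonormal_iff_ite.mp b.orthonormal
    have hVVH : V * Vᴴ = 1 := by
      ext j k
      have := hbo j k
      rw [PiLp.inner_apply] at this
      simp only [RCLike.inner_apply, starRingEnd_apply] at this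
      simp only [Matrix.mul_apply, Matrix.conjTranspose_apply, Matrix.one_apply, hVdef,
        Matrix.of_apply, RingHom.id_apply, starRingEnd_apply, star_star]
      rw [← this]
      exact Finset.sum_congr rfl fun _ _ => mul_comm _ _
    refine ⟨V, Matrix.mem_unitaryGroup_iff.mpr hVVH, fun j => ?_⟩
    have := hbo j 0
    rw [PiLp.inner_apply, hb0] at this
    simp only [RCLike.inner_apply, starRingEnd_apply] at this
    rw [← this]
    exact Finset.sum_congr rfl fun _ _ => mul_comm _ _
  obtain ⟨V, hVmem, hrow⟩ := hex
  have hVHV : Vᴴ * V = 1 := Matrix.mem_unitaryGroup_iff'.mp hVmem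
  have hVVH : V * Vᴴ = 1 := Matrix.mem_unitaryGroup_iff.mp hVmem
  set C' : Fin (n+1) → Matrix (Fin d) (Fin d) ℂ := fun j => ∑ i, V j i • C i with hC'def
  -- Conjugated mixing matrix, for the trace-preservation condition.
  set Vc : Matrix (Fin (n+1)) (Fin (n+1)) ℂ := V.map (starRingEnd ℂ) with hVcdef
  have hVc : Vcᴴ * Vc = 1 := by
    ext i k
    have h := congrFun (congrFun hVHV k) i
    simp only [Matrix.mul_apply, Matrix.conjTranspose_apply, Matrix.one_apply] at h ⊢
    have hik : (if i = k then (1:ℂ) else 0) = (if k = i then 1 else 0) := by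
      by_cases hik : i = k <;> simp [hik, Ne.symm, eq_comm]
    rw [hik, ← h]
    refine Finset.sum_congr rfl fun j _ => ?_
    rw [mul_comm]
    simp only [hVcdef, Matrix.map_apply, starRingEnd_apply, star_star]
  refine ⟨V, hVmem, C', fun j => rfl, ?_, ?_, ?_⟩
  · -- ∑ (C' j)ᴴ * C' j = 1
    have h1 := mix_lemma Vc hVc (fun i => (C i)ᴴ) 1
    simp only [mul_one, Matrix.conjTranspose_conjTranspose] at h1
    calc ∑ j, (C' j)ᴴ * C' j
        = ∑ j, (∑ i, Vc j i • (C i)ᴴ) * (∑ i, Vc j i • (C i)ᴴ)ᴴ := by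
          refine Finset.sum_congr rfl fun j _ => ?_
          have hdag : (C' j)ᴴ = ∑ i, Vc j i • (C i)ᴴ := by
            show (∑ i, V j i • C i)ᴴ = _
            rw [Matrix.conjTranspose_sum]
            refine Finset.sum_congr rfl fun i _ => ?_
            rw [Matrix.conjTranspose_smul]
            rfl
          rw [hdag, ← Matrix.conjTranspose_conjTranspose (C' j), hdag]
      _ = ∑ i, (C i)ᴴ * C i := h1
      _ = 1 := hC
  · intro ρ
    exact mix_lemma V hVHV C ρ
  · intro ρ
    have hctrl : ∀ j, ctrlOp (if j = 0 then (1:ℂ) else 0) (C' j)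
        = ∑ i, V j i • ctrlOp (α i) (C i) := by
      intro j
      have kron : Matrix.single (1 : Fin 2) (1 : Fin 2) (1:ℂ) ⊗ₖ (C' j)
          = ∑ i, V j i • (Matrix.single (1 : Fin 2) (1 : Fin 2) (1:ℂ) ⊗ₖ C i) := by
        ext ⟨a, x⟩ ⟨c, y⟩
        simp [hC'def, Matrix.kroneckerMap_apply, Matrix.sum_apply, Finset.mul_sum,
          mul_left_comm]
      simp only [ctrlOp, smul_add, smul_smul, Finset.sum_add_distrib]
      rw [← Finset.sum_smul, hrow j]
      exact congrArg (HAdd.hAdd _) kron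
    rw [Finset.sum_congr rfl fun j _ => by rw [hctrl j]]
    exact mix_lemma V hVHV (fun i => ctrlOp (α i) (C i)) ρ
end
end

section
/- Let (C_i)_{i=1}^n and (C'_j)_{j=1}^n be two Kraus representations of the same channel C on ℂ^d. Define the controlled Kraus families K_1 = |0⟩⟨0|⊗I + |1⟩⟨1|⊗C_1, K_i = |1⟩⟨1|⊗C_i for i≥2, and similarly K'_j from (C'_j). Then the two controlled channels ∑_i K_i ρ K_i† and ∑_j K'_j ρ K'_j† are equal as maps if and only if C_1 = C'_1. -/
open Matrix Kronecker

noncomputable section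

namespace CtrlAux

abbrev P0 : Matrix (Fin 2) (Fin 2) ℂ := Matrix.single 0 0 (1:ℂ)
abbrev P1 : Matrix (Fin 2) (Fin 2) ℂ := Matrix.single 1 1 (1:ℂ)
abbrev E01 : Matrix (Fin 2) (Fin 2) ℂ := Matrix.single 0 1 (1:ℂ)

lemma kron_conjT {d : ℕ} (X : Matrix (Fin d) (Fin d) ℂ) (a b : Fin 2) :
    ((Matrix.single a b (1:ℂ)) ⊗ₖ X)ᴴ = (Matrix.single b a (1:ℂ)) ⊗ₖ Xᴴ := by
  ext ⟨i,u⟩ ⟨j,v⟩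
  by_cases h1 : a = j <;> by_cases h2 : b = i <;>
    simp [Matrix.conjTranspose_apply, Matrix.single, Matrix.kroneckerMap_apply, h1, h2]

lemma block_entry {d : ℕ} (A B : Matrix (Fin d) (Fin d) ℂ)
    (ρ : Matrix (Fin 2 × Fin d) (Fin 2 × Fin d) ℂ) (a b : Fin 2) (x y : Fin d) :
    (((1 : Matrix (Fin 2) (Fin 2) ℂ) ⊗ₖ A) * ρ * ((1 : Matrix (Fin 2) (Fin 2) ℂ) ⊗ₖ B)) (a,x) (b,y)
      = (A * (Matrix.of fun u v => ρ (a,u) (b,v)) * B) x y := by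
  simp [Matrix.mul_apply, Fintype.sum_prod_type, one_apply, Finset.mul_sum, Finset.sum_mul,
    mul_assoc]

lemma middle_eq {d n m : ℕ} (C : Fin n → Matrix (Fin d) (Fin d) ℂ)
    (C' : Fin m → Matrix (Fin d) (Fin d) ℂ)
    (hsame : ∀ ρ : Matrix (Fin d) (Fin d) ℂ,
      ∑ i, C i * ρ * (C i)ᴴ = ∑ j, C' j * ρ * (C' j)ᴴ)
    (ρ : Matrix (Fin 2 × Fin d) (Fin 2 × Fin d) ℂ) :
    ∑ i, ((1 : Matrix (Fin 2) (Fin 2) ℂ) ⊗ₖ C i) * ρ * ((1 : Matrix (Fin 2) (Fin 2) ℂ) ⊗ₖ (C i)ᴴ)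
      = ∑ j, ((1 : Matrix (Fin 2) (Fin 2) ℂ) ⊗ₖ C' j) * ρ
          * ((1 : Matrix (Fin 2) (Fin 2) ℂ) ⊗ₖ (C' j)ᴴ) := by
  ext ⟨a,x⟩ ⟨b,y⟩
  have h := congrFun (congrFun (hsame (Matrix.of fun u v => ρ (a,u) (b,v))) x) y
  simpa [Matrix.sum_apply, block_entry] using h

lemma ctrl_decomp {d : ℕ} (α : ℂ) (X : Matrix (Fin d) (Fin d) ℂ) :
    ctrlOp α X = α • ((P0 : Matrix (Fin 2) (Fin 2) ℂ) ⊗ₖ (1 : Matrix (Fin d) (Fin d) ℂ))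
      + (P1 ⊗ₖ (1 : Matrix (Fin d) (Fin d) ℂ)) * ((1 : Matrix (Fin 2) (Fin 2) ℂ) ⊗ₖ X) := by
  rw [ctrlOp, ← Matrix.mul_kronecker_mul, mul_one, one_mul]

lemma ctrl_decompT {d : ℕ} (α : ℂ) (X : Matrix (Fin d) (Fin d) ℂ) :
    (ctrlOp α X)ᴴ = (starRingEnd ℂ α) • ((P0 : Matrix (Fin 2) (Fin 2) ℂ)
        ⊗ₖ (1 : Matrix (Fin d) (Fin d) ℂ))
      + ((1 : Matrix (Fin 2) (Fin 2) ℂ) ⊗ₖ Xᴴ) * (P1 ⊗ₖ (1 : Matrix (Fin d) (Fin d) ℂ)) := by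
  rw [ctrlOp, conjTranspose_add, conjTranspose_smul, kron_conjT, kron_conjT,
    ← Matrix.mul_kronecker_mul, mul_one, one_mul]
  simp

lemma expand {d : ℕ} (α : ℂ) (hα : α = 1 ∨ α = 0) (X : Matrix (Fin d) (Fin d) ℂ)
    (ρ : Matrix (Fin 2 × Fin d) (Fin 2 × Fin d) ℂ) :
    ctrlOp α X * ρ * (ctrlOp α X)ᴴ
      = α • ((P0 ⊗ₖ (1 : Matrix (Fin d) (Fin d) ℂ)) * ρ * (P0 ⊗ₖ 1)
          + (P0 ⊗ₖ 1) * ρ * (((1 : Matrix (Fin 2) (Fin 2) ℂ) ⊗ₖ Xᴴ) * (P1 ⊗ₖ 1))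
          + (P1 ⊗ₖ 1) * (((1 : Matrix (Fin 2) (Fin 2) ℂ) ⊗ₖ X) * ρ) * (P0 ⊗ₖ 1))
        + (P1 ⊗ₖ 1) * (((1 : Matrix (Fin 2) (Fin 2) ℂ) ⊗ₖ X) * ρ
            * ((1 : Matrix (Fin 2) (Fin 2) ℂ) ⊗ₖ Xᴴ)) * (P1 ⊗ₖ 1) := by
  rw [ctrl_decompT, ctrl_decomp]
  rcases hα with h | h <;> subst h <;>
    simp [add_mul, mul_add, Matrix.mul_assoc] <;> abel

lemma channel_form {d n : ℕ} (C : Fin (n+1) → Matrix (Fin d) (Fin d) ℂ)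
    (ρ : Matrix (Fin 2 × Fin d) (Fin 2 × Fin d) ℂ) :
    ∑ i, ctrlOp (if i = 0 then (1:ℂ) else 0) (C i) * ρ
        * (ctrlOp (if i = 0 then (1:ℂ) else 0) (C i))ᴴ
      = ((P0 ⊗ₖ (1 : Matrix (Fin d) (Fin d) ℂ)) * ρ * (P0 ⊗ₖ 1)
          + (P0 ⊗ₖ 1) * ρ * (((1 : Matrix (Fin 2) (Fin 2) ℂ) ⊗ₖ (C 0)ᴴ) * (P1 ⊗ₖ 1))
          + (P1 ⊗ₖ 1) * (((1 : Matrix (Fin 2) (Fin 2) ℂ) ⊗ₖ C 0) * ρ) * (P0 ⊗ₖ 1))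
        + (P1 ⊗ₖ 1) * (∑ i, ((1 : Matrix (Fin 2) (Fin 2) ℂ) ⊗ₖ C i) * ρ
            * ((1 : Matrix (Fin 2) (Fin 2) ℂ) ⊗ₖ (C i)ᴴ)) * (P1 ⊗ₖ 1) := by
  have he : ∀ i : Fin (n+1), ctrlOp (if i = 0 then (1:ℂ) else 0) (C i) * ρ
        * (ctrlOp (if i = 0 then (1:ℂ) else 0) (C i))ᴴ
      = (if i = 0 then (1:ℂ) else 0) • ((P0 ⊗ₖ (1 : Matrix (Fin d) (Fin d) ℂ)) * ρ * (P0 ⊗ₖ 1)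
          + (P0 ⊗ₖ 1) * ρ * (((1 : Matrix (Fin 2) (Fin 2) ℂ) ⊗ₖ (C i)ᴴ) * (P1 ⊗ₖ 1))
          + (P1 ⊗ₖ 1) * (((1 : Matrix (Fin 2) (Fin 2) ℂ) ⊗ₖ C i) * ρ) * (P0 ⊗ₖ 1))
        + (P1 ⊗ₖ 1) * (((1 : Matrix (Fin 2) (Fin 2) ℂ) ⊗ₖ C i) * ρ
            * ((1 : Matrix (Fin 2) (Fin 2) ℂ) ⊗ₖ (C i)ᴴ)) * (P1 ⊗ₖ 1) := fun i =>
    expand _ (by split_ifs <;> simp) _ _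
  rw [Finset.sum_congr rfl fun i _ => he i, Finset.sum_add_distrib]
  congr 1
  · rw [Finset.sum_eq_single 0]
    · simp
    · intro i _ hi; simp [hi]
    · simp
  · rw [Matrix.mul_sum, Matrix.sum_mul]

end CtrlAux

/-- two controlled channels built (with amplitudes `(1,0,…,0)`) from
two Kraus representations of the same channel coincide iff the pinned (first)
Kraus operators coincide. -/
theorem ctrl_channel_eq_iff_pinned_eq {d n m : ℕ}
    (C : Fin (n+1) → Matrix (Fin d) (Fin d) ℂ)
    (C' : Fin (m+1) → Matrix (Fin d) (Fin d) ℂ)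
    (hC : ∑ i, (C i)ᴴ * C i = 1)
    (hC' : ∑ j, (C' j)ᴴ * C' j = 1)
    (hsame : ∀ ρ : Matrix (Fin d) (Fin d) ℂ,
      ∑ i, C i * ρ * (C i)ᴴ = ∑ j, C' j * ρ * (C' j)ᴴ) :
    ((∀ ρ : Matrix (Fin 2 × Fin d) (Fin 2 × Fin d) ℂ,
        ∑ i, ctrlOp (if i = 0 then (1:ℂ) else 0) (C i) * ρ
             * (ctrlOp (if i = 0 then (1:ℂ) else 0) (C i))ᴴ
          = ∑ j, ctrlOp (if j = 0 then (1:ℂ) else 0) (C' j) * ρ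
             * (ctrlOp (if j = 0 then (1:ℂ) else 0) (C' j))ᴴ)
      ↔ C 0 = C' 0) := by
  constructor
  · intro h
    have hP0E : CtrlAux.P0 * CtrlAux.E01 = CtrlAux.E01 := by
      simpa using Matrix.single_mul_single_same (i := (0:Fin 2)) (j := 0) (c := (1:ℂ)) 1 1
    have hEP0 : CtrlAux.E01 * CtrlAux.P0 = 0 :=
      Matrix.single_mul_single_of_ne (i := (0:Fin 2)) (j := 1) (k := 0) (c := (1:ℂ)) (by decide) 1
    have hP1E : CtrlAux.P1 * CtrlAux.E01 = 0 :=
      Matrix.single_mul_single_of_ne (i := (1:Fin 2)) (j := 1) (k := 0) (c := (1:ℂ)) (by decide) 1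
    have hEP1 : CtrlAux.E01 * CtrlAux.P1 = CtrlAux.E01 := by
      simpa using Matrix.single_mul_single_same (i := (0:Fin 2)) (j := 1) (c := (1:ℂ)) 1 1
    have key := h (CtrlAux.E01 ⊗ₖ (1 : Matrix (Fin d) (Fin d) ℂ))
    rw [CtrlAux.channel_form, CtrlAux.channel_form] at key
    simp only [Matrix.mul_sum, Matrix.sum_mul, ← Matrix.mul_kronecker_mul, Matrix.one_mul,
      Matrix.mul_one, one_mul, mul_one, hP0E, hEP0, hP1E, hEP1, Matrix.zero_kronecker,
      Matrix.zero_mul, Matrix.mul_zero, zero_add, add_zero, Finset.sum_const_zero] at key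
    have hch : (C 0)ᴴ = (C' 0)ᴴ := by
      ext x y
      have h2 := congrFun (congrFun key (0, x)) (1, y)
      simpa [Matrix.kroneckerMap_apply, Matrix.single] using h2
    simpa using congrArg Matrix.conjTranspose hch
  · intro h0 ρ
    rw [CtrlAux.channel_form, CtrlAux.channel_form, h0,
      CtrlAux.middle_eq C C' hsame ρ]
end
end

section
/- Let H_S = H_S^0 ⊕ H_S^1 with dim H_S^0 = 1. Every sector-preserving channel on H_S of type (1,d) has a Kraus representation (C̃_i) with C̃_1 = 1 ⊕ C_1 and C̃_i = 0 ⊕ C_i for i ≥ 2, where (C_i) is a Kraus representation of some channel on the d-dimensional sector H_S^1. -/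
open Matrix

noncomputable section

/-- Block-diagonal operator `α ⊕ C` on `H_S = ℂ ⊕ ℂ^d`. -/
def sectOp {d : ℕ} (α : ℂ) (C : Matrix (Fin d) (Fin d) ℂ) :
    Matrix (Unit ⊕ Fin d) (Unit ⊕ Fin d) ℂ :=
  Matrix.fromBlocks (α • (1 : Matrix Unit Unit ℂ)) 0 0 C

lemma mix_aux {m k l p : Type*} [Fintype m] [DecidableEq m] [Fintype k] [Fintype l] [Fintype p]
    (U : Matrix m m ℂ) (hU : Uᴴ * U = 1) (D : m → Matrix k l ℂ) (E : m → Matrix p l ℂ) :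
    ∑ j, (∑ i, U j i • D i) * (∑ i, U j i • E i)ᴴ = ∑ i, D i * (E i)ᴴ := by
  have h1 : ∀ i i' : m, ∑ j, U j i * star (U j i') = if i = i' then 1 else 0 := by
    intro i i'
    have h := congrFun (congrFun hU i') i
    simp only [Matrix.mul_apply, Matrix.conjTranspose_apply, Matrix.one_apply] at h
    calc ∑ j, U j i * star (U j i') = ∑ j, star (U j i') * U j i := by
          simp [mul_comm]
      _ = if i = i' then 1 else 0 := by rw [h]; simp [eq_comm]
  have step : ∀ j : m, (∑ i, U j i • D i) * (∑ i, U j i • E i)ᴴ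
      = ∑ i, ∑ i', (U j i * star (U j i')) • (D i * (E i')ᴴ) := by
    intro j
    rw [conjTranspose_sum, Matrix.sum_mul]
    refine Finset.sum_congr rfl fun i _ => ?_
    rw [Matrix.smul_mul, Matrix.mul_sum, Finset.smul_sum]
    refine Finset.sum_congr rfl fun i' _ => ?_
    simp [Matrix.mul_smul, smul_smul, mul_comm]
  simp only [step]
  rw [Finset.sum_comm]
  refine Finset.sum_congr rfl fun i _ => ?_
  rw [Finset.sum_comm]
  have : ∀ i' : m, ∑ j, (U j i * star (U j i')) • (D i * (E i')ᴴ)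
      = (if i = i' then (1:ℂ) else 0) • (D i * (E i')ᴴ) := by
    intro i'
    rw [← Finset.sum_smul, h1]
  simp only [this]
  simp

lemma sectOp_sum {d : ℕ} {m : Type*} [Fintype m] (c : m → ℂ) (α : m → ℂ)
    (C : m → Matrix (Fin d) (Fin d) ℂ) :
    sectOp (∑ i, c i * α i) (∑ i, c i • C i) = ∑ i, c i • sectOp (α i) (C i) := by
  ext (x | x) (y | y) <;>
    simp [sectOp, Matrix.sum_apply, Matrix.one_apply, Finset.sum_mul]

/-- every sector-preserving channel of type `(1,d)`, given by Kraus
operators `α i ⊕ C i`, admits a Kraus representation of the canonical form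
`C̃ 0 = 1 ⊕ C' 0`, `C̃ j = 0 ⊕ C' j` for `j ≥ 1`, with `(C' j)` a Kraus
representation of a channel on the `d`-dimensional sector. -/
theorem sector_preserving_canonical_kraus {d n : ℕ}
    (C : Fin (n+1) → Matrix (Fin d) (Fin d) ℂ) (α : Fin (n+1) → ℂ)
    (hC : ∑ i, (C i)ᴴ * C i = 1)
    (hα : ∑ i, ‖α i‖ ^ 2 = (1 : ℝ)) :
    ∃ C' : Fin (n+1) → Matrix (Fin d) (Fin d) ℂ,
      (∑ j, (C' j)ᴴ * C' j = 1) ∧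
      ∀ ρ : Matrix (Unit ⊕ Fin d) (Unit ⊕ Fin d) ℂ,
        ∑ i, sectOp (α i) (C i) * ρ * (sectOp (α i) (C i))ᴴ
          = ∑ j, sectOp (if j = 0 then (1:ℂ) else 0) (C' j) * ρ
              * (sectOp (if j = 0 then (1:ℂ) else 0) (C' j))ᴴ := by
  classical
  -- the unit vector `star ∘ α`
  set v : EuclideanSpace ℂ (Fin (n+1)) := WithLp.toLp 2 (fun i => star (α i)) with hv_def
  have hvnorm : ‖v‖ = 1 := by
    rw [EuclideanSpace.norm_eq]
    have : ∀ i, ‖v i‖ = ‖α i‖ := fun i => norm_star _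
    simp only [this, hα, Real.sqrt_one]
  set w : Fin (n+1) → EuclideanSpace ℂ (Fin (n+1)) := fun _ => v with hw_def
  have hv : Orthonormal ℂ (Set.restrict {(0 : Fin (n+1))} w) := by
    constructor
    · rintro ⟨i, hi⟩; exact hvnorm
    · rintro ⟨i, hi⟩ ⟨j, hj⟩ hij
      exact absurd (Subtype.ext (hi.trans hj.symm)) hij
  obtain ⟨b, hb⟩ := hv.exists_orthonormalBasis_extension_of_card_eq
    (by simp [finrank_euclideanSpace] :
      Module.finrank ℂ (EuclideanSpace ℂ (Fin (n+1))) = Fintype.card (Fin (n+1)))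
  have hb0 : b 0 = v := hb 0 rfl
  set U : Matrix (Fin (n+1)) (Fin (n+1)) ℂ := fun j i => b j i with hU_def
  have hbinner : ∀ j j' : Fin (n+1),
      (∑ i, star (b j i) * b j' i) = if j = j' then (1:ℂ) else 0 := by
    intro j j'
    have := orthonormal_iff_ite.mp b.orthonormal j j'
    simpa [PiLp.inner_apply, RCLike.inner_apply, mul_comm] using this
  have hUU : U * Uᴴ = 1 := by
    ext j j'
    have h2 := congrArg star (hbinner j j')
    simp only [star_sum, star_mul', star_star] at h2
    simp only [Matrix.mul_apply, Matrix.conjTranspose_apply, Matrix.one_apply]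
    simp only [hU_def]
    rw [h2]
    by_cases h : j = j' <;> simp [h]
  have hU : Uᴴ * U = 1 := mul_eq_one_comm.mp hUU
  -- the mixed Kraus operators
  set C' : Fin (n+1) → Matrix (Fin d) (Fin d) ℂ := fun j => ∑ i, U j i • C i with hC'_def
  set α' : Fin (n+1) → ℂ := fun j => ∑ i, U j i * α i with hα'_def
  -- amplitudes
  have hα' : ∀ j, α' j = if j = 0 then (1:ℂ) else 0 := by
    intro j
    by_cases hj : j = 0
    · subst hj
      simp only [hα'_def, if_pos rfl]
      have : ∀ i, U 0 i * α i = ((‖α i‖ ^ 2 : ℝ) : ℂ) := by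
        intro i
        have : U 0 i = star (α i) := by
          simp [hU_def, hb0, hv_def]
        rw [this, show star (α i) = (starRingEnd ℂ) (α i) from rfl, RCLike.conj_mul]
        norm_cast
      rw [Finset.sum_congr rfl fun i _ => this i]
      have h := congrArg (fun r : ℝ => (r : ℂ)) hα
      push_cast at h
      simpa using h
    · rw [if_neg hj]
      have h0 := hbinner j 0
      rw [if_neg hj] at h0
      have : star (α' j) = 0 := by
        simp only [hα'_def, star_sum, star_mul']
        rw [← h0]
        refine Finset.sum_congr rfl fun i _ => ?_
        have : b 0 i = star (α i) := by simp [hb0, hv_def]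
        simp [hU_def, this, mul_comm]
      simpa using congrArg star this
  -- conjugate mixing matrix is also unitary
  set V : Matrix (Fin (n+1)) (Fin (n+1)) ℂ := fun j i => star (U j i) with hV_def
  have hV : Vᴴ * V = 1 := by
    ext i i'
    have h := congrFun (congrFun hU i) i'
    simp only [Matrix.mul_apply, Matrix.conjTranspose_apply, Matrix.one_apply] at h
    have h2 := congrArg star h
    simp only [star_sum, star_mul', star_star] at h2
    simp only [Matrix.mul_apply, Matrix.conjTranspose_apply, Matrix.one_apply]
    simp only [hV_def, star_star]
    rw [h2]
    by_cases hii : i = i' <;> simp [hii]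
  refine ⟨C', ?_, ?_⟩
  · -- Kraus condition
    have key := mix_aux V hV (fun i => (C i)ᴴ) (fun i => (C i)ᴴ)
    simp only [conjTranspose_conjTranspose] at key
    rw [hC] at key
    rw [← key]
    refine Finset.sum_congr rfl fun j _ => ?_
    have h1 : (C' j)ᴴ = ∑ i, V j i • (C i)ᴴ := by
      simp [hC'_def, hV_def, conjTranspose_sum, conjTranspose_smul]
    have h2 : C' j = (∑ i, V j i • (C i)ᴴ)ᴴ := by
      simp [hC'_def, hV_def, conjTranspose_sum, conjTranspose_smul]
    rw [h1, ← h2]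
  · -- channel equality
    intro ρ
    have hsect : ∀ j, sectOp (if j = 0 then (1:ℂ) else 0) (C' j)
        = ∑ i, U j i • sectOp (α i) (C i) := by
      intro j
      rw [← hα' j, hα'_def, hC'_def]
      exact sectOp_sum _ _ _
    have key := mix_aux U hU (fun i => sectOp (α i) (C i) * ρ) (fun i => sectOp (α i) (C i))
    rw [← key]
    refine Finset.sum_congr rfl fun j _ => ?_
    rw [hsect j]
    congr 1
    rw [Matrix.sum_mul]
    exact Finset.sum_congr rfl fun i _ => (Matrix.smul_mul _ _ _).symm
end
end

section
/- Sector-preserving channels of type (1,d) on H_S = ℂ ⊕ ℂ^d are in one-to-one correspondence with pairs (C, C_1), where C is a quantum channel on ℂ^d and C_1 is a Kraus operator of C: the channel corresponding to (C, C_1) has Kraus operators C̃_1 = 1 ⊕ C_1 and C̃_i = 0 ⊕ C_i (i≥2) for any Kraus completion (C_i)_{i≥2}, and this channel determines (C, C_1) uniquely. -/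
open Matrix

noncomputable section

lemma sum_fromBlocks {ι l r p q : Type*} [Fintype ι] [DecidableEq ι]
    (f : ι → Matrix l p ℂ) (g : ι → Matrix l q ℂ)
    (h : ι → Matrix r p ℂ) (k : ι → Matrix r q ℂ) :
    ∑ i, Matrix.fromBlocks (f i) (g i) (h i) (k i)
      = Matrix.fromBlocks (∑ i, f i) (∑ i, g i) (∑ i, h i) (∑ i, k i) := by
  ext (a | a) (b | b) <;>
  simp [Matrix.sum_apply, Matrix.fromBlocks]

lemma sect_mul {d : ℕ} (α β : ℂ) (A B : Matrix (Fin d) (Fin d) ℂ)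
    (P : Matrix Unit Unit ℂ) (Q : Matrix Unit (Fin d) ℂ)
    (R : Matrix (Fin d) Unit ℂ) (S : Matrix (Fin d) (Fin d) ℂ) :
    sectOp α A * Matrix.fromBlocks P Q R S * (sectOp β B)ᴴ
      = Matrix.fromBlocks ((α * star β) • P) (α • (Q * Bᴴ))
          ((star β) • (A * R)) (A * S * Bᴴ) := by
  simp only [sectOp, Matrix.fromBlocks_conjTranspose, Matrix.fromBlocks_multiply]
  simp [Matrix.conjTranspose_smul, Matrix.smul_mul, Matrix.mul_smul, smul_smul,
    mul_comm]

lemma channel_sum {d N : ℕ} (C : Fin (N+1) → Matrix (Fin d) (Fin d) ℂ)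
    (P : Matrix Unit Unit ℂ) (Q : Matrix Unit (Fin d) ℂ)
    (R : Matrix (Fin d) Unit ℂ) (S : Matrix (Fin d) (Fin d) ℂ) :
    ∑ i, sectOp (if i = 0 then (1:ℂ) else 0) (C i) * Matrix.fromBlocks P Q R S
         * (sectOp (if i = 0 then (1:ℂ) else 0) (C i))ᴴ
      = Matrix.fromBlocks P (Q * (C 0)ᴴ) (C 0 * R) (∑ i, C i * S * (C i)ᴴ) := by
  simp only [sect_mul]
  rw [sum_fromBlocks]
  congr 1 <;> simp [apply_ite star, ite_smul, Finset.sum_ite_eq']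

/-- one-to-one correspondence between sector-preserving channels of type
`(1,d)` and pairs `(𝒞, C₁)` of a channel with a pinned Kraus operator.  Given two Kraus
representations `(C i)` and `(C' j)` (with pinned first elements `C 0`, `C' 0`), the
associated sector-preserving channels coincide iff the represented channels and the
pinned Kraus operators coincide.  This expresses both that the construction does not
depend on the Kraus completion, and that the channel determines `(𝒞, C₁)` uniquely. -/
theorem sector_preserving_pinned_correspondence {d n m : ℕ}
    (C : Fin (n+1) → Matrix (Fin d) (Fin d) ℂ)
    (C' : Fin (m+1) → Matrix (Fin d) (Fin d) ℂ)
    (hC : ∑ i, (C i)ᴴ * C i = 1)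
    (hC' : ∑ j, (C' j)ᴴ * C' j = 1) :
    ((∀ ρ : Matrix (Fin d) (Fin d) ℂ,
        ∑ i, C i * ρ * (C i)ᴴ = ∑ j, C' j * ρ * (C' j)ᴴ) ∧ C 0 = C' 0)
    ↔ (∀ ρ : Matrix (Unit ⊕ Fin d) (Unit ⊕ Fin d) ℂ,
        ∑ i, sectOp (if i = 0 then (1:ℂ) else 0) (C i) * ρ
             * (sectOp (if i = 0 then (1:ℂ) else 0) (C i))ᴴ
          = ∑ j, sectOp (if j = 0 then (1:ℂ) else 0) (C' j) * ρ
             * (sectOp (if j = 0 then (1:ℂ) else 0) (C' j))ᴴ) := by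
  constructor
  · rintro ⟨hch, h0⟩ ρ
    rw [← Matrix.fromBlocks_toBlocks ρ, channel_sum, channel_sum, h0, hch]
  · intro h
    constructor
    · intro ρ
      have := h (Matrix.fromBlocks 0 0 0 ρ)
      rw [channel_sum, channel_sum] at this
      have := congrArg Matrix.toBlocks₂₂ this
      simpa [Matrix.toBlocks_fromBlocks₂₂] using this
    · ext i k
      have := h (Matrix.fromBlocks 0 0 (Matrix.single k () 1) 0)
      rw [channel_sum, channel_sum] at this
      have h2 := congrArg Matrix.toBlocks₂₁ this
      rw [Matrix.toBlocks_fromBlocks₂₁, Matrix.toBlocks_fromBlocks₂₁] at h2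
      have h3 := congrFun (congrFun h2 i) ()
      simpa [Matrix.mul_apply, Matrix.single, Finset.sum_ite_eq'] using h3
end
end

section
/- Let V: H_T → H_S embed H_T isometrically onto the sector H_S^1 of H_S = ℂ|s⁰⟩ ⊕ H_S^1, and consider the controlled-SWAP construction: for a sector-preserving channel C̃ of type (1,d) with canonical Kraus representation C̃_i = δ_{i1} ⊕ C_i, and any pure state |ψ⟩ on ℂ²⊗H_T, one has (I ⊗ V† ⊗ ⟨s⁰|) · ctrl-SWAP · (I ⊗ I ⊗ C̃_i) · ctrl-SWAP · (I ⊗ V ⊗ |s⁰⟩) |ψ⟩ = (δ_{i1} |0⟩⟨0|⊗I + |1⟩⟨1|⊗C_i) |ψ⟩. Consequently, the CTRL supermap built from these components maps C̃ to the controlled channel ctrl_{C_1}-C. -/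
open Matrix Kronecker

noncomputable section

/-- The isometry `V : H_T → H_S` embedding `ℂ^d` onto the sector `H_S^1`. -/
def Vemb (d : ℕ) : Matrix (Unit ⊕ Fin d) (Fin d) ℂ :=
  Matrix.of fun s t => match s with
    | Sum.inl _ => 0
    | Sum.inr i => if i = t then 1 else 0

/-- The unit vector `|s⁰⟩` spanning the one-dimensional sector `H_S^0`. -/
def s0vec (d : ℕ) : (Unit ⊕ Fin d) → ℂ :=
  fun s => match s with | Sum.inl _ => 1 | Sum.inr _ => 0

/-- The controlled-SWAP unitary on `ℂ² ⊗ H_S ⊗ H_S`. -/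
def cswap (d : ℕ) :
    Matrix (Fin 2 × (Unit ⊕ Fin d) × (Unit ⊕ Fin d))
           (Fin 2 × (Unit ⊕ Fin d) × (Unit ⊕ Fin d)) ℂ :=
  Matrix.of fun p q =>
    if p.1 = q.1 then
      (if p.1 = 0 then (if p.2 = q.2 then 1 else 0)
       else (if p.2.1 = q.2.2 ∧ p.2.2 = q.2.1 then 1 else 0))
    else 0

/-- The encoding operator `I ⊗ V ⊗ |s⁰⟩ : ℂ² ⊗ H_T → ℂ² ⊗ H_S ⊗ H_S`. -/
def encodeOp (d : ℕ) :
    Matrix (Fin 2 × (Unit ⊕ Fin d) × (Unit ⊕ Fin d)) (Fin 2 × Fin d) ℂ :=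
  Matrix.of fun p q =>
    (if p.1 = q.1 then 1 else 0) * Vemb d p.2.1 q.2 * s0vec d p.2.2

/-- The decoding operator `I ⊗ V† ⊗ ⟨s⁰| : ℂ² ⊗ H_S ⊗ H_S → ℂ² ⊗ H_T`. -/
def decodeOp (d : ℕ) :
    Matrix (Fin 2 × Fin d) (Fin 2 × (Unit ⊕ Fin d) × (Unit ⊕ Fin d)) ℂ :=
  Matrix.of fun q p =>
    (if q.1 = p.1 then 1 else 0) * star (Vemb d p.2.1 q.2) * star (s0vec d p.2.2)

/-- The operator `I ⊗ I ⊗ A` on `ℂ² ⊗ H_S ⊗ H_S`. -/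
def liftThird {d : ℕ} (A : Matrix (Unit ⊕ Fin d) (Unit ⊕ Fin d) ℂ) :
    Matrix (Fin 2 × (Unit ⊕ Fin d) × (Unit ⊕ Fin d))
           (Fin 2 × (Unit ⊕ Fin d) × (Unit ⊕ Fin d)) ℂ :=
  Matrix.of fun p q =>
    (if p.1 = q.1 ∧ p.2.1 = q.2.1 then 1 else 0) * A p.2.2 q.2.2

lemma encodeOp_eq (d : ℕ) : encodeOp d =
    Matrix.of fun p q => if p = (q.1, Sum.inr q.2, Sum.inl ()) then 1 else 0 := by
  ext ⟨a, s1, s2⟩ ⟨b, u⟩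
  rcases s1 with _ | i <;> rcases s2 with _ | j <;>
    simp [encodeOp, Vemb, s0vec, Prod.ext_iff, eq_comm, ite_and]

lemma decodeOp_eq (d : ℕ) : decodeOp d =
    Matrix.of fun q p => if p = (q.1, Sum.inr q.2, Sum.inl ()) then 1 else 0 := by
  ext ⟨b, u⟩ ⟨a, s1, s2⟩
  rcases s1 with _ | i <;> rcases s2 with _ | j <;>
    simp [decodeOp, Vemb, s0vec, Prod.ext_iff, eq_comm, ite_and]

lemma cswap_apply (d : ℕ) (p q) : cswap d p q =
    if q = (p.1, if p.1 = 0 then p.2 else (p.2.2, p.2.1)) then 1 else 0 := by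
  obtain ⟨a, r1, r2⟩ := p
  obtain ⟨b, s1, s2⟩ := q
  fin_cases a <;> fin_cases b <;>
    simp [cswap, Prod.ext_iff, eq_comm, and_comm]

lemma cswap_apply' (d : ℕ) (p q) : cswap d p q =
    if p = (q.1, if q.1 = 0 then q.2 else (q.2.2, q.2.1)) then 1 else 0 := by
  obtain ⟨a, r1, r2⟩ := p
  obtain ⟨b, s1, s2⟩ := q
  fin_cases a <;> fin_cases b <;>
    simp [cswap, Prod.ext_iff, eq_comm, and_comm]

lemma key {d : ℕ} (α : ℂ) (C : Matrix (Fin d) (Fin d) ℂ) :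
    decodeOp d * cswap d * liftThird (sectOp α C) * cswap d * encodeOp d = ctrlOp α C := by
  ext ⟨a, t⟩ ⟨b, u⟩
  simp only [Matrix.mul_apply, decodeOp_eq, encodeOp_eq, Matrix.of_apply, ite_mul, mul_ite,
    one_mul, mul_one, zero_mul, mul_zero, Finset.sum_ite_eq, Finset.sum_ite_eq',
    Finset.mem_univ, if_true]
  simp only [cswap_apply, cswap_apply', ite_mul, mul_ite, one_mul, mul_one, zero_mul,
    mul_zero, Finset.sum_ite_eq, Finset.sum_ite_eq', Finset.mem_univ, if_true]
  fin_cases a <;> fin_cases b <;>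
    simp [liftThird, sectOp, ctrlOp, Matrix.single, Matrix.one_apply, eq_comm,
      Fintype.sum_prod_type, Fin.sum_univ_two, Fintype.sum_sum_type, Prod.ext_iff, ite_and]

/-- the controlled-SWAP circuit turns each canonical Kraus operator
`δ_{i0} ⊕ C i` of a sector-preserving channel into the controlled Kraus operator
`δ_{i0}|0⟩⟨0| ⊗ I + |1⟩⟨1| ⊗ C i`; consequently the CTRL supermap maps the
sector-preserving channel to the controlled channel `ctrl_{C 0}-𝒞`. -/
theorem ctrl_supermap_circuit {d n : ℕ}
    (C : Fin (n+1) → Matrix (Fin d) (Fin d) ℂ)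
    (hC : ∑ i, (C i)ᴴ * C i = 1) :
    (∀ (i : Fin (n+1)) (ψ : (Fin 2 × Fin d) → ℂ),
      (decodeOp d * cswap d * liftThird (sectOp (if i = 0 then (1:ℂ) else 0) (C i))
        * cswap d * encodeOp d).mulVec ψ
        = (ctrlOp (if i = 0 then (1:ℂ) else 0) (C i)).mulVec ψ) ∧
    (∀ ρ : Matrix (Fin 2 × Fin d) (Fin 2 × Fin d) ℂ,
      ∑ i, (decodeOp d * cswap d * liftThird (sectOp (if i = 0 then (1:ℂ) else 0) (C i))
            * cswap d * encodeOp d) * ρ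
          * ((decodeOp d * cswap d * liftThird (sectOp (if i = 0 then (1:ℂ) else 0) (C i))
            * cswap d * encodeOp d))ᴴ
        = ∑ i, ctrlOp (if i = 0 then (1:ℂ) else 0) (C i) * ρ
            * (ctrlOp (if i = 0 then (1:ℂ) else 0) (C i))ᴴ) := by
  refine ⟨fun i ψ => by rw [key], fun ρ => by simp only [key]⟩
end
end

section
/- Let (α_i)_{i=1}^n and (β_i)_{i=1}^n be unit vectors in ℂⁿ with |⟨α|β⟩| < 1. Then there exists a unitary n×n matrix U such that U maps α to the first standard basis vector e_1 and maps β to γ e_1 + √(1−|γ|²) e_2, where γ = ⟨α|β⟩. Consequently, the 2-compositely-controlled channel with Kraus operators α_i|1⟩⟨1|⊗I + β_i|2⟩⟨2|⊗I + |0⟩⟨0|⊗C_i admits a Kraus representation of the form: Ĉ'_1 = |0⟩⟨0|⊗C'_1 + |1⟩⟨1|⊗I + γ|2⟩⟨2|⊗I, Ĉ'_2 = |0⟩⟨0|⊗C'_2 + √(1−|γ|²)|2⟩⟨2|⊗I, and Ĉ'_i = |0⟩⟨0|⊗C'_i for i≥3, where (C'_i) is a Kraus representation of C. -/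
open Matrix Kronecker

noncomputable section

/-- Projector `|k⟩⟨k|` on the three-dimensional control space. -/
def Q (k : Fin 3) : Matrix (Fin 3) (Fin 3) ℂ := Matrix.single k k 1

lemma aux_coef {ι : Type*} [Fintype ι] [DecidableEq ι] (U : Matrix ι ι ℂ)
    (hU : Uᴴ * U = 1) (i k : ι) :
    (∑ j, U j i * (starRingEnd ℂ) (U j k)) = if k = i then (1:ℂ) else 0 := by
  have h := congrFun (congrFun hU k) i
  simpa [Matrix.mul_apply, Matrix.conjTranspose_apply, Matrix.one_apply, mul_comm] using h

lemma aux1 {ι d : Type*} [Fintype ι] [DecidableEq ι] [Fintype d]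
    (U : Matrix ι ι ℂ) (hU : Uᴴ * U = 1) (M : ι → Matrix d d ℂ) :
    ∑ j, (∑ i, U j i • M i)ᴴ * (∑ i, U j i • M i) = ∑ i, (M i)ᴴ * M i := by
  calc ∑ j, (∑ i, U j i • M i)ᴴ * (∑ i, U j i • M i)
      = ∑ j, ∑ i, ∑ k, (U j i * (starRingEnd ℂ) (U j k)) • ((M k)ᴴ * M i) := by
        simp [Matrix.conjTranspose_sum, Matrix.conjTranspose_smul, Finset.sum_mul,
          Finset.mul_sum, Matrix.smul_mul, Matrix.mul_smul, smul_smul]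
    _ = ∑ i, ∑ k, (∑ j, U j i * (starRingEnd ℂ) (U j k)) • ((M k)ᴴ * M i) := by
        rw [Finset.sum_comm]
        refine Finset.sum_congr rfl fun i _ => ?_
        rw [Finset.sum_comm]
        simp [Finset.sum_smul]
    _ = ∑ i, (M i)ᴴ * M i := by
        simp [aux_coef U hU, ite_smul]

lemma aux2 {ι d : Type*} [Fintype ι] [DecidableEq ι] [Fintype d]
    (U : Matrix ι ι ℂ) (hU : Uᴴ * U = 1) (M : ι → Matrix d d ℂ) (ρ : Matrix d d ℂ) :
    ∑ j, (∑ i, U j i • M i) * ρ * (∑ i, U j i • M i)ᴴ = ∑ i, M i * ρ * (M i)ᴴ := by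
  calc ∑ j, (∑ i, U j i • M i) * ρ * (∑ i, U j i • M i)ᴴ
      = ∑ j, ∑ i, ∑ k, (U j i * (starRingEnd ℂ) (U j k)) • (M i * ρ * (M k)ᴴ) := by
        simp [Matrix.conjTranspose_sum, Matrix.conjTranspose_smul, Finset.sum_mul,
          Finset.mul_sum, Matrix.smul_mul, Matrix.mul_smul, smul_smul]
        refine Finset.sum_congr rfl fun j _ => ?_
        rw [Finset.sum_comm]
        exact Finset.sum_congr rfl fun i _ => Finset.sum_congr rfl fun k _ => by rw [mul_comm]
    _ = ∑ i, ∑ k, (∑ j, U j i * (starRingEnd ℂ) (U j k)) • (M i * ρ * (M k)ᴴ) := by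
        rw [Finset.sum_comm]
        refine Finset.sum_congr rfl fun i _ => ?_
        rw [Finset.sum_comm]
        simp [Finset.sum_smul]
    _ = ∑ i, M i * ρ * (M i)ᴴ := by
        simp [aux_coef U hU, ite_smul]

lemma inner_euclid {m : ℕ} (x y : Fin m → ℂ) :
    (inner ℂ ((WithLp.equiv 2 (Fin m → ℂ)).symm x) ((WithLp.equiv 2 (Fin m → ℂ)).symm y) : ℂ)
      = ∑ i, star (x i) * y i := by
  rw [PiLp.inner_apply]
  simp only [RCLike.inner_apply, WithLp.equiv_symm_apply, PiLp.toLp_apply, starRingEnd_apply]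
  exact Finset.sum_congr rfl fun i _ => mul_comm _ _

lemma inner_euclid' {m : ℕ} (x : EuclideanSpace ℂ (Fin m)) (y : Fin m → ℂ) :
    (inner ℂ x ((WithLp.equiv 2 (Fin m → ℂ)).symm y) : ℂ) = ∑ i, star (x i) * y i := by
  rw [PiLp.inner_apply]
  simp only [RCLike.inner_apply, WithLp.equiv_symm_apply, PiLp.toLp_apply, starRingEnd_apply]
  exact Finset.sum_congr rfl fun i _ => mul_comm _ _

lemma inner_euclid'' {m : ℕ} (x y : EuclideanSpace ℂ (Fin m)) :
    (inner ℂ x y : ℂ) = ∑ i, star (x i) * y i := by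
  rw [PiLp.inner_apply]
  simp only [RCLike.inner_apply, starRingEnd_apply]
  exact Finset.sum_congr rfl fun i _ => mul_comm _ _

lemma kron_sum {d ι : Type*} [Fintype d] [Fintype ι] (A : Matrix (Fin 3) (Fin 3) ℂ)
    (f : ι → Matrix d d ℂ) :
    A ⊗ₖ (∑ i, f i) = ∑ i, A ⊗ₖ f i := by
  ext ⟨a, x⟩ ⟨b, y⟩
  simp [Matrix.kroneckerMap_apply, Finset.mul_sum, Matrix.sum_apply]

/-- Gram–Schmidt canonical form for 2-compositely-controlled channels.
Given unit vectors `α, β` with `|⟨α|β⟩| < 1` and `γ = ⟨α|β⟩`, there is a unitary `U`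
sending `α ↦ e₁` and `β ↦ γ e₁ + √(1−|γ|²) e₂`; consequently the 2-compositely-
controlled channel with Kraus operators `α i |1⟩⟨1|⊗I + β i |2⟩⟨2|⊗I + |0⟩⟨0|⊗C i`
admits the canonical Kraus representation described in Theorem 5 of the paper. -/
theorem two_composite_control_canonical {n : ℕ}
    (α β : Fin (n+2) → ℂ)
    (hα : ∑ i, star (α i) * α i = 1)
    (hβ : ∑ i, star (β i) * β i = 1)
    (hγ : ‖∑ i, star (α i) * β i‖ < 1) :
    (∃ U ∈ Matrix.unitaryGroup (Fin (n+2)) ℂ,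
      U.mulVec α = (Pi.single 0 1 : Fin (n+2) → ℂ) ∧
      U.mulVec β = (∑ i, star (α i) * β i) • (Pi.single 0 1 : Fin (n+2) → ℂ)
        + (↑(Real.sqrt (1 - ‖∑ i, star (α i) * β i‖ ^ 2)) : ℂ)
            • (Pi.single 1 1 : Fin (n+2) → ℂ)) ∧
    (∀ (d : ℕ) (C : Fin (n+2) → Matrix (Fin d) (Fin d) ℂ),
      (∑ i, (C i)ᴴ * C i = 1) →
      ∃ C' : Fin (n+2) → Matrix (Fin d) (Fin d) ℂ,
        (∑ j, (C' j)ᴴ * C' j = 1) ∧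
        (∀ ρ : Matrix (Fin d) (Fin d) ℂ,
          ∑ j, C' j * ρ * (C' j)ᴴ = ∑ i, C i * ρ * (C i)ᴴ) ∧
        (∀ ρ : Matrix (Fin 3 × Fin d) (Fin 3 × Fin d) ℂ,
          ∑ i, (α i • (Q 1 ⊗ₖ (1 : Matrix (Fin d) (Fin d) ℂ))
                + β i • (Q 2 ⊗ₖ (1 : Matrix (Fin d) (Fin d) ℂ))
                + Q 0 ⊗ₖ C i) * ρ
              * ((α i • (Q 1 ⊗ₖ (1 : Matrix (Fin d) (Fin d) ℂ))
                + β i • (Q 2 ⊗ₖ (1 : Matrix (Fin d) (Fin d) ℂ))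
                + Q 0 ⊗ₖ C i))ᴴ
          = ∑ j, (if j = 0 then
                    Q 0 ⊗ₖ C' j + Q 1 ⊗ₖ (1 : Matrix (Fin d) (Fin d) ℂ)
                      + (∑ i, star (α i) * β i)
                          • (Q 2 ⊗ₖ (1 : Matrix (Fin d) (Fin d) ℂ))
                  else if j = 1 then
                    Q 0 ⊗ₖ C' j
                      + (↑(Real.sqrt (1 - ‖∑ i, star (α i) * β i‖ ^ 2)) : ℂ)
                          • (Q 2 ⊗ₖ (1 : Matrix (Fin d) (Fin d) ℂ))
                  else Q 0 ⊗ₖ C' j) * ρ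
              * ((if j = 0 then
                    Q 0 ⊗ₖ C' j + Q 1 ⊗ₖ (1 : Matrix (Fin d) (Fin d) ℂ)
                      + (∑ i, star (α i) * β i)
                          • (Q 2 ⊗ₖ (1 : Matrix (Fin d) (Fin d) ℂ))
                  else if j = 1 then
                    Q 0 ⊗ₖ C' j
                      + (↑(Real.sqrt (1 - ‖∑ i, star (α i) * β i‖ ^ 2)) : ℂ)
                          • (Q 2 ⊗ₖ (1 : Matrix (Fin d) (Fin d) ℂ))
                  else Q 0 ⊗ₖ C' j))ᴴ)) := by
  set γ : ℂ := ∑ i, star (α i) * β i with hγdef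
  set c : ℝ := Real.sqrt (1 - ‖γ‖ ^ 2) with hcdef
  have habs : ‖γ‖ ^ 2 < 1 := by
    have := norm_nonneg γ
    nlinarith
  have hc2 : c ^ 2 = 1 - ‖γ‖ ^ 2 := Real.sq_sqrt (by linarith)
  have hcpos : 0 < c := Real.sqrt_pos.mpr (by linarith)
  have hcne : (c : ℂ) ≠ 0 := by exact_mod_cast hcpos.ne'
  set a : EuclideanSpace ℂ (Fin (n+2)) := (WithLp.equiv 2 _).symm α with ha
  set bβ : EuclideanSpace ℂ (Fin (n+2)) := (WithLp.equiv 2 _).symm β with hbβ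
  have haa : (inner ℂ a a : ℂ) = 1 := by rw [ha, inner_euclid]; exact hα
  have hbb : (inner ℂ bβ bβ : ℂ) = 1 := by rw [hbβ, inner_euclid]; exact hβ
  have hab : (inner ℂ a bβ : ℂ) = γ := by rw [ha, hbβ, inner_euclid]
  have hba : (inner ℂ bβ a : ℂ) = (starRingEnd ℂ) γ := by
    rw [← inner_conj_symm, hab]
  set b : EuclideanSpace ℂ (Fin (n+2)) := (c : ℂ)⁻¹ • (bβ - γ • a) with hb
  have hsub : (inner ℂ (bβ - γ • a) (bβ - γ • a) : ℂ) = ((1 - ‖γ‖ ^ 2 : ℝ) : ℂ) := by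
    simp only [inner_sub_left, inner_sub_right, inner_smul_left, inner_smul_right,
      haa, hbb, hab, hba]
    have h2 : γ * (starRingEnd ℂ) γ = ((‖γ‖ ^ 2 : ℝ) : ℂ) := by
      rw [mul_comm, Complex.conj_mul']
      push_cast; ring
    push_cast
    rw [mul_comm ((starRingEnd ℂ) γ) γ, h2]
    push_cast; ring
  have hab0 : (inner ℂ a b : ℂ) = 0 := by
    rw [hb, inner_smul_right, inner_sub_right, inner_smul_right, hab, haa]
    ring
  have hba0 : (inner ℂ b a : ℂ) = 0 := by rw [← inner_conj_symm, hab0, map_zero]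
  have hbb1 : (inner ℂ b b : ℂ) = 1 := by
    rw [hb, inner_smul_left, inner_smul_right, hsub, map_inv₀, Complex.conj_ofReal]
    have h3 : ((1 - ‖γ‖ ^ 2 : ℝ) : ℂ) = (c : ℂ) ^ 2 := by
      rw [← hc2]; push_cast; ring
    rw [h3]
    field_simp
  have h01 : (0 : Fin (n+2)) ≠ 1 := by
    simp [Fin.ext_iff]
  set v : Fin (n+2) → EuclideanSpace ℂ (Fin (n+2)) :=
    fun j => if j = 0 then a else if j = 1 then b else 0 with hv
  have hortho : Orthonormal ℂ (Set.restrict {0, 1} v) := by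
    rw [orthonormal_iff_ite]
    rintro ⟨i, hi⟩ ⟨j, hj⟩
    simp only [Set.mem_insert_iff, Set.mem_singleton_iff] at hi hj
    rcases hi with rfl | rfl <;> rcases hj with rfl | rfl <;>
      simp [Set.restrict, hv, h01, h01.symm, haa, hbb1, hab0, hba0, Subtype.mk.injEq,
        (by rw [norm_eq_sqrt_re_inner (𝕜 := ℂ) a, haa]; simp : ‖a‖ = 1),
        (by rw [norm_eq_sqrt_re_inner (𝕜 := ℂ) b, hbb1]; simp : ‖b‖ = 1)]
  obtain ⟨u, hu⟩ := hortho.exists_orthonormalBasis_extension_of_card_eq (by simp)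
  have hu0 : u 0 = a := by
    have := hu 0 (by simp)
    simpa [hv] using this
  have hu1 : u 1 = b := by
    have := hu 1 (by simp)
    simpa [hv, h01.symm] using this
  have huon := u.orthonormal
  rw [orthonormal_iff_ite] at huon
  set U : Matrix (Fin (n+2)) (Fin (n+2)) ℂ := Matrix.of fun j i => star (u j i) with hU
  have hUmem : U ∈ Matrix.unitaryGroup (Fin (n+2)) ℂ := by
    rw [Matrix.mem_unitaryGroup_iff]
    ext j k
    have h := huon j k
    rw [inner_euclid''] at h
    simpa [hU, Matrix.mul_apply, Matrix.one_apply, star_star, eq_comm] using h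
  have hU' : Uᴴ * U = 1 := by
    have := Matrix.mem_unitaryGroup_iff'.mp hUmem
    simpa [Matrix.star_eq_conjTranspose] using this
  have hinner : ∀ (j : Fin (n+2)) (y : Fin (n+2) → ℂ),
      (U.mulVec y) j = (inner ℂ (u j) ((WithLp.equiv 2 (Fin (n+2) → ℂ)).symm y) : ℂ) := by
    intro j y
    rw [inner_euclid']
    simp [hU, Matrix.mulVec, dotProduct]
  have hmvα : U.mulVec α = (Pi.single 0 1 : Fin (n+2) → ℂ) := by
    funext j
    rw [hinner j α, ← ha, ← hu0, huon j 0]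
    simp [Pi.single_apply]
  have hbβeq : bβ = γ • a + (c : ℂ) • b := by
    rw [hb, smul_inv_smul₀ hcne]
    abel
  have hmvβ : U.mulVec β = γ • (Pi.single 0 1 : Fin (n+2) → ℂ)
      + (c : ℂ) • (Pi.single 1 1 : Fin (n+2) → ℂ) := by
    funext j
    rw [hinner j β, ← hbβ, hbβeq, inner_add_right, inner_smul_right, inner_smul_right,
      ← hu0, ← hu1, huon j 0, huon j 1]
    simp [Pi.single_apply]
  refine ⟨⟨U, hUmem, hmvα, hmvβ⟩, ?_⟩
  intro d C hC
  refine ⟨fun j => ∑ i, U j i • C i, ?_, fun ρ => aux2 U hU' C ρ, ?_⟩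
  · rw [aux1 U hU' C]; exact hC
  intro ρ
  have key : ∀ j : Fin (n+2),
      (if j = 0 then
          Q 0 ⊗ₖ (∑ i, U j i • C i) + Q 1 ⊗ₖ (1 : Matrix (Fin d) (Fin d) ℂ)
            + γ • (Q 2 ⊗ₖ (1 : Matrix (Fin d) (Fin d) ℂ))
        else if j = 1 then
          Q 0 ⊗ₖ (∑ i, U j i • C i)
            + ((c : ℝ) : ℂ) • (Q 2 ⊗ₖ (1 : Matrix (Fin d) (Fin d) ℂ))
        else Q 0 ⊗ₖ (∑ i, U j i • C i))
      = ∑ i, U j i • (α i • (Q 1 ⊗ₖ (1 : Matrix (Fin d) (Fin d) ℂ))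
          + β i • (Q 2 ⊗ₖ (1 : Matrix (Fin d) (Fin d) ℂ)) + Q 0 ⊗ₖ C i) := by
    intro j
    have hq : Q 0 ⊗ₖ (∑ i, U j i • C i) = ∑ i, U j i • (Q 0 ⊗ₖ C i) := by
      rw [kron_sum]
      exact Finset.sum_congr rfl fun i _ => Matrix.kronecker_smul _ _ _
    have expand : ∑ i, U j i • (α i • (Q 1 ⊗ₖ (1 : Matrix (Fin d) (Fin d) ℂ))
          + β i • (Q 2 ⊗ₖ (1 : Matrix (Fin d) (Fin d) ℂ)) + Q 0 ⊗ₖ C i)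
        = ((U.mulVec α) j) • (Q 1 ⊗ₖ (1 : Matrix (Fin d) (Fin d) ℂ))
          + ((U.mulVec β) j) • (Q 2 ⊗ₖ (1 : Matrix (Fin d) (Fin d) ℂ))
          + Q 0 ⊗ₖ (∑ i, U j i • C i) := by
      calc ∑ i, U j i • (α i • (Q 1 ⊗ₖ (1 : Matrix (Fin d) (Fin d) ℂ))
              + β i • (Q 2 ⊗ₖ (1 : Matrix (Fin d) (Fin d) ℂ)) + Q 0 ⊗ₖ C i)
          = ∑ i, ((U j i * α i) • (Q 1 ⊗ₖ (1 : Matrix (Fin d) (Fin d) ℂ))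
              + (U j i * β i) • (Q 2 ⊗ₖ (1 : Matrix (Fin d) (Fin d) ℂ))
              + U j i • (Q 0 ⊗ₖ C i)) := by
            refine Finset.sum_congr rfl fun i _ => ?_
            rw [smul_add, smul_add, smul_smul, smul_smul]
        _ = (∑ i, U j i * α i) • (Q 1 ⊗ₖ (1 : Matrix (Fin d) (Fin d) ℂ))
              + (∑ i, U j i * β i) • (Q 2 ⊗ₖ (1 : Matrix (Fin d) (Fin d) ℂ))
              + ∑ i, U j i • (Q 0 ⊗ₖ C i) := by
            rw [Finset.sum_add_distrib, Finset.sum_add_distrib, Finset.sum_smul,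
              Finset.sum_smul]
        _ = ((U.mulVec α) j) • (Q 1 ⊗ₖ (1 : Matrix (Fin d) (Fin d) ℂ))
              + ((U.mulVec β) j) • (Q 2 ⊗ₖ (1 : Matrix (Fin d) (Fin d) ℂ))
              + Q 0 ⊗ₖ (∑ i, U j i • C i) := by rw [hq]; rfl
    rw [expand, hmvα, hmvβ]
    by_cases hj0 : j = 0
    · subst hj0
      simp [Pi.single_apply, h01.symm]
      abel
    · by_cases hj1 : j = 1
      · subst hj1
        simp [Pi.single_apply, h01, hj0]
        abel
      · simp [Pi.single_apply, hj0, hj1]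
  simp only [key]
  exact (aux2 U hU' (fun i => α i • (Q 1 ⊗ₖ (1 : Matrix (Fin d) (Fin d) ℂ))
    + β i • (Q 2 ⊗ₖ (1 : Matrix (Fin d) (Fin d) ℂ)) + Q 0 ⊗ₖ C i) ρ).symm
end
end

section
/- Let H_S = H_S^0 ⊕ H_S^1 ⊕ H_S^2 with dim H_S^0 = d and dim H_S^1 = dim H_S^2 = 1. Every sector-preserving channel on H_S (of type (d,1,1)) has Kraus operators of the form C̃_i = C_i ⊕ α_i ⊕ β_i where (C_i) is a Kraus representation of a channel on H_S^0 and ∑|α_i|² = ∑|β_i|² = 1; moreover it admits a Kraus representation of the form C̃'_1 = C'_1 ⊕ 1 ⊕ γ, C̃'_2 = C'_2 ⊕ 0 ⊕ √(1−|γ|²), C̃'_i = C'_i ⊕ 0 ⊕ 0 for i ≥ 3, with |γ| ≤ 1. -/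
open Matrix

open scoped InnerProductSpace

noncomputable section

/-- Block-diagonal operator `C ⊕ a ⊕ b` on `H_S = ℂ^d ⊕ ℂ ⊕ ℂ`. -/
def sect2Op {d : ℕ} (C : Matrix (Fin d) (Fin d) ℂ) (a b : ℂ) :
    Matrix (Fin d ⊕ (Unit ⊕ Unit)) (Fin d ⊕ (Unit ⊕ Unit)) ℂ :=
  Matrix.fromBlocks C 0 0
    (Matrix.fromBlocks (a • (1 : Matrix Unit Unit ℂ)) 0 0 (b • (1 : Matrix Unit Unit ℂ)))

variable {d : ℕ}

lemma sect2Op_apply {C : Matrix (Fin d) (Fin d) ℂ} {a b : ℂ} :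
    ∀ p q, sect2Op C a b p q =
      match p, q with
      | Sum.inl i, Sum.inl j => C i j
      | Sum.inr (Sum.inl _), Sum.inr (Sum.inl _) => a
      | Sum.inr (Sum.inr _), Sum.inr (Sum.inr _) => b
      | _, _ => 0 := by
  rintro (i | u | u) (j | v | v) <;>
    simp [sect2Op, Matrix.fromBlocks, Matrix.one_apply]

lemma sect2Op_conjTranspose (C : Matrix (Fin d) (Fin d) ℂ) (a b : ℂ) :
    (sect2Op C a b)ᴴ = sect2Op Cᴴ ((starRingEnd ℂ) a) ((starRingEnd ℂ) b) := by
  ext p q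
  rcases p with i | u | u <;> rcases q with j | v | v <;>
    simp [sect2Op_apply, Matrix.conjTranspose_apply]

lemma sect2Op_mul (C C' : Matrix (Fin d) (Fin d) ℂ) (a a' b b' : ℂ) :
    sect2Op C a b * sect2Op C' a' b' = sect2Op (C * C') (a * a') (b * b') := by
  ext p q
  rcases p with i | u | u <;> rcases q with j | v | v <;>
    simp [sect2Op_apply, Matrix.mul_apply, Fintype.sum_sum_type]

lemma sect2Op_smul (z : ℂ) (C : Matrix (Fin d) (Fin d) ℂ) (a b : ℂ) :
    z • sect2Op C a b = sect2Op (z • C) (z * a) (z * b) := by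
  ext p q
  rcases p with i | u | u <;> rcases q with j | v | v <;> simp [sect2Op_apply]

lemma sect2Op_sum {ι : Type*} (s : Finset ι) (C : ι → Matrix (Fin d) (Fin d) ℂ) (a b : ι → ℂ) :
    ∑ k ∈ s, sect2Op (C k) (a k) (b k) = sect2Op (∑ k ∈ s, C k) (∑ k ∈ s, a k) (∑ k ∈ s, b k) := by
  ext p q
  rcases p with i | u | u <;> rcases q with j | v | v <;>
    simp [sect2Op_apply, Matrix.sum_apply]

lemma sect2Op_one : sect2Op (1 : Matrix (Fin d) (Fin d) ℂ) 1 1 = 1 := by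
  ext p q
  rcases p with i | u | u <;> rcases q with j | v | v <;>
    simp [sect2Op_apply, Matrix.one_apply]

lemma sect2Op_eq_one_iff {C : Matrix (Fin d) (Fin d) ℂ} {a b : ℂ} :
    sect2Op C a b = 1 ↔ C = 1 ∧ a = 1 ∧ b = 1 := by
  constructor
  · intro h
    refine ⟨?_, ?_, ?_⟩
    · ext i j
      have := congrFun (congrFun h (Sum.inl i)) (Sum.inl j)
      simpa [sect2Op_apply, Matrix.one_apply] using this
    · have := congrFun (congrFun h (Sum.inr (Sum.inl ()))) (Sum.inr (Sum.inl ()))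
      simpa [sect2Op_apply, Matrix.one_apply] using this
    · have := congrFun (congrFun h (Sum.inr (Sum.inr ()))) (Sum.inr (Sum.inr ()))
      simpa [sect2Op_apply, Matrix.one_apply] using this
  · rintro ⟨h1, h2, h3⟩; rw [h1, h2, h3, sect2Op_one]

lemma sum_sum_mul_conj_eq_zero {ι κ : Type*} [Fintype ι] [Fintype κ] (f : ι → κ → ℂ)
    (h : ∑ i, ∑ j, f i j * (starRingEnd ℂ) (f i j) = 0) : ∀ i j, f i j = 0 := by
  have h' : ∑ i, ∑ j, Complex.normSq (f i j) = 0 := by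
    have : ((∑ i, ∑ j, Complex.normSq (f i j) : ℝ) : ℂ) = 0 := by
      push_cast
      simpa [Complex.mul_conj] using h
    exact_mod_cast this
  intro i j
  have hi := (Finset.sum_eq_zero_iff_of_nonneg (fun i _ => Finset.sum_nonneg
    (fun j _ => Complex.normSq_nonneg _))).mp h' i (Finset.mem_univ i)
  have hj := (Finset.sum_eq_zero_iff_of_nonneg
    (fun j _ => Complex.normSq_nonneg _)).mp hi j (Finset.mem_univ j)
  exact Complex.normSq_eq_zero.mp hj

lemma entry0 (M : Matrix (Fin d ⊕ (Unit ⊕ Unit)) (Fin d ⊕ (Unit ⊕ Unit)) ℂ)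
    (p : Fin d ⊕ (Unit ⊕ Unit)) :
    (M * Matrix.fromBlocks (1 : Matrix (Fin d) (Fin d) ℂ) 0 0 (0 : Matrix (Unit ⊕ Unit) (Unit ⊕ Unit) ℂ) * Mᴴ) p p
      = ∑ j, M p (Sum.inl j) * (starRingEnd ℂ) (M p (Sum.inl j)) := by
  simp [Matrix.mul_apply, Fintype.sum_sum_type, Matrix.fromBlocks, Matrix.one_apply,
    Matrix.conjTranspose_apply, Finset.mul_sum, Finset.sum_mul, mul_comm]

lemma entry1 (M : Matrix (Fin d ⊕ (Unit ⊕ Unit)) (Fin d ⊕ (Unit ⊕ Unit)) ℂ)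
    (p : Fin d ⊕ (Unit ⊕ Unit)) :
    (M * Matrix.fromBlocks (0 : Matrix (Fin d) (Fin d) ℂ) 0 0
        (Matrix.fromBlocks (1 : Matrix Unit Unit ℂ) 0 0 (0 : Matrix Unit Unit ℂ)) * Mᴴ) p p
      = M p (Sum.inr (Sum.inl ())) * (starRingEnd ℂ) (M p (Sum.inr (Sum.inl ()))) := by
  simp [Matrix.mul_apply, Fintype.sum_sum_type, Matrix.fromBlocks, Matrix.one_apply,
    Matrix.conjTranspose_apply]

lemma entry2 (M : Matrix (Fin d ⊕ (Unit ⊕ Unit)) (Fin d ⊕ (Unit ⊕ Unit)) ℂ)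
    (p : Fin d ⊕ (Unit ⊕ Unit)) :
    (M * Matrix.fromBlocks (0 : Matrix (Fin d) (Fin d) ℂ) 0 0
        (Matrix.fromBlocks (0 : Matrix Unit Unit ℂ) 0 0 (1 : Matrix Unit Unit ℂ)) * Mᴴ) p p
      = M p (Sum.inr (Sum.inr ())) * (starRingEnd ℂ) (M p (Sum.inr (Sum.inr ()))) := by
  simp [Matrix.mul_apply, Fintype.sum_sum_type, Matrix.fromBlocks, Matrix.one_apply,
    Matrix.conjTranspose_apply]

lemma sum_mul_conj_eq_zero {ι : Type*} [Fintype ι] (f : ι → ℂ)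
    (h : ∑ i, f i * (starRingEnd ℂ) (f i) = 0) : ∀ i, f i = 0 := by
  intro i
  exact sum_sum_mul_conj_eq_zero (fun i (_ : Unit) => f i) (by simpa using h) i ()

lemma blockDiag {N : ℕ} (L : Fin N → Matrix (Fin d ⊕ (Unit ⊕ Unit)) (Fin d ⊕ (Unit ⊕ Unit)) ℂ)
    (hsect0 : ∀ ρd : Matrix (Fin d) (Fin d) ℂ, ∃ σd,
      ∑ k, L k * Matrix.fromBlocks ρd 0 0 0 * (L k)ᴴ = Matrix.fromBlocks σd 0 0 0)
    (hsect1 : ∀ ρ₁ : Matrix Unit Unit ℂ, ∃ σ₁,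
      ∑ k, L k * Matrix.fromBlocks 0 0 0 (Matrix.fromBlocks ρ₁ 0 0 0) * (L k)ᴴ
        = Matrix.fromBlocks 0 0 0 (Matrix.fromBlocks σ₁ 0 0 0))
    (hsect2 : ∀ ρ₂ : Matrix Unit Unit ℂ, ∃ σ₂,
      ∑ k, L k * Matrix.fromBlocks 0 0 0 (Matrix.fromBlocks 0 0 0 ρ₂) * (L k)ᴴ
        = Matrix.fromBlocks 0 0 0 (Matrix.fromBlocks 0 0 0 σ₂)) :
    ∀ k, L k = sect2Op (Matrix.of fun i j => L k (Sum.inl i) (Sum.inl j))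
        (L k (Sum.inr (Sum.inl ())) (Sum.inr (Sum.inl ())))
        (L k (Sum.inr (Sum.inr ())) (Sum.inr (Sum.inr ()))) := by
  obtain ⟨σ0, h0⟩ := hsect0 1
  obtain ⟨σ1, h1⟩ := hsect1 1
  obtain ⟨σ2, h2⟩ := hsect2 1
  -- zeros from sector 0
  have z0 : ∀ (x : Unit ⊕ Unit) (k : Fin N) (j : Fin d), L k (Sum.inr x) (Sum.inl j) = 0 := by
    intro x
    have := congrFun (congrFun h0 (Sum.inr x)) (Sum.inr x)
    rw [Matrix.sum_apply] at this
    simp only [entry0] at this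
    have hz : (Matrix.fromBlocks σ0 0 0 (0 : Matrix (Unit ⊕ Unit) (Unit ⊕ Unit) ℂ))
        (Sum.inr x) (Sum.inr x) = 0 := by simp [Matrix.fromBlocks]
    exact sum_sum_mul_conj_eq_zero (fun k j => L k (Sum.inr x) (Sum.inl j)) (by rw [this, hz])
  have z1 : ∀ (p : Fin d ⊕ (Unit ⊕ Unit)), p ≠ Sum.inr (Sum.inl ()) →
      ∀ k, L k p (Sum.inr (Sum.inl ())) = 0 := by
    intro p hp
    have := congrFun (congrFun h1 p) p
    rw [Matrix.sum_apply] at this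
    simp only [entry1] at this
    have hz : (Matrix.fromBlocks (0 : Matrix (Fin d) (Fin d) ℂ) 0 0
        (Matrix.fromBlocks σ1 0 0 (0 : Matrix Unit Unit ℂ))) p p = 0 := by
      rcases p with i | u | u
      · simp [Matrix.fromBlocks]
      · exact absurd rfl hp
      · simp [Matrix.fromBlocks]
    exact sum_mul_conj_eq_zero (fun k => L k p (Sum.inr (Sum.inl ()))) (by rw [this, hz])
  have z2 : ∀ (p : Fin d ⊕ (Unit ⊕ Unit)), p ≠ Sum.inr (Sum.inr ()) →
      ∀ k, L k p (Sum.inr (Sum.inr ())) = 0 := by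
    intro p hp
    have := congrFun (congrFun h2 p) p
    rw [Matrix.sum_apply] at this
    simp only [entry2] at this
    have hz : (Matrix.fromBlocks (0 : Matrix (Fin d) (Fin d) ℂ) 0 0
        (Matrix.fromBlocks (0 : Matrix Unit Unit ℂ) 0 0 σ2)) p p = 0 := by
      rcases p with i | u | u
      · simp [Matrix.fromBlocks]
      · simp [Matrix.fromBlocks]
      · exact absurd rfl hp
    exact sum_mul_conj_eq_zero (fun k => L k p (Sum.inr (Sum.inr ()))) (by rw [this, hz])
  intro k
  ext p q
  rcases p with i | u | u <;> rcases q with j | v | v <;>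
    simp only [sect2Op_apply, Matrix.of_apply]
  · exact z1 (Sum.inl i) (by simp) k
  · exact z2 (Sum.inl i) (by simp) k
  · exact z0 (Sum.inl ()) k j
  · exact z2 (Sum.inr (Sum.inl ())) (by simp) k
  · exact z0 (Sum.inr ()) k j
  · exact z1 (Sum.inr (Sum.inr ())) (by simp) k


lemma sect2Op_zero {d : ℕ} : sect2Op (0 : Matrix (Fin d) (Fin d) ℂ) 0 0 = 0 := by
  ext p q
  rcases p with i | u | u <;> rcases q with j | v | v <;> simp [sect2Op_apply]

lemma mix_core {n m : ℕ} {I : Type*} [Fintype I] [DecidableEq I]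
    (W V : Matrix (Fin m) (Fin n) ℂ)
    (hWV : ∀ k l, ∑ j, W j k * V j l = if k = l then 1 else 0)
    (A B : Fin n → Matrix I I ℂ) :
    ∑ j, (∑ k, W j k • A k) * (∑ l, V j l • B l) = ∑ k, A k * B k := by
  calc ∑ j, (∑ k, W j k • A k) * (∑ l, V j l • B l)
      = ∑ j, ∑ l, ∑ k, (V j l * W j k) • (A k * B l) := by
        simp only [Finset.sum_mul, Finset.mul_sum, smul_mul_assoc, mul_smul_comm,
          smul_smul, Finset.smul_sum]
    _ = ∑ l, ∑ k, (∑ j, V j l * W j k) • (A k * B l) := by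
        rw [Finset.sum_comm]
        refine Finset.sum_congr rfl fun l _ => ?_
        rw [Finset.sum_comm]
        exact Finset.sum_congr rfl fun k _ => (Finset.sum_smul).symm
    _ = ∑ k, A k * B k := by
        have h' : ∀ l k, (∑ j, V j l * W j k) = if k = l then 1 else 0 := by
          intro l k
          rw [← hWV k l]
          exact Finset.sum_congr rfl fun j _ => mul_comm _ _
        simp only [h', ite_smul, one_smul, zero_smul]
        simp [Finset.sum_ite_eq]

lemma sum_pad {β : Type*} [AddCommMonoid β] {N m : ℕ} (f : Fin N → β) :
    ∑ j : Fin (N + m), (if h : (j : ℕ) < N then f ⟨j, h⟩ else 0) = ∑ k, f k := by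
  have e1 : ∑ j : Fin (N + m), (if h : (j : ℕ) < N then f ⟨j, h⟩ else 0)
      = ∑ j ∈ Finset.range (N + m), (if h : j < N then f ⟨j, h⟩ else 0) :=
    Fin.sum_univ_eq_sum_range (fun j => if h : j < N then f ⟨j, h⟩ else 0) (N + m)
  have e2 : ∑ k, f k = ∑ j ∈ Finset.range N, (if h : j < N then f ⟨j, h⟩ else 0) := by
    rw [← Fin.sum_univ_eq_sum_range (fun j => if h : j < N then f ⟨j, (by exact h)⟩ else 0) N]
    exact Finset.sum_congr rfl fun k _ => by rw [dif_pos k.2]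
  rw [e1, e2]
  exact (Finset.sum_subset (Finset.range_subset_range.mpr (Nat.le_add_right N m))
    (fun j _ hj => dif_neg (by simpa using hj))).symm

lemma gram_pair_basis {N : ℕ} (a b : EuclideanSpace ℂ (Fin (N+2)))
    (ha : ‖a‖ = 1) (hb : ‖b‖ = 1) :
    ∃ B : OrthonormalBasis (Fin (N+2)) ℂ (EuclideanSpace ℂ (Fin (N+2))),
      (∀ j, B.repr a j = if j = 0 then 1 else 0) ∧
      (∀ j, B.repr b j = if j = 0 then (⟪a, b⟫_ℂ)
        else if j = 1 then ((Real.sqrt (1 - ‖⟪a, b⟫_ℂ‖ ^ 2) : ℝ) : ℂ) else 0) := by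
  have h01 : (0 : Fin (N+2)) ≠ 1 := by simp [Fin.ext_iff]
  set γ : ℂ := ⟪a, b⟫_ℂ with hγ
  set v : EuclideanSpace ℂ (Fin (N+2)) := b - γ • a with hv
  have haa : ⟪a, a⟫_ℂ = 1 := by rw [inner_self_eq_norm_sq_to_K, ha]; norm_num
  have hbb : ⟪b, b⟫_ℂ = 1 := by rw [inner_self_eq_norm_sq_to_K, hb]; norm_num
  have hav : ⟪a, v⟫_ℂ = 0 := by
    rw [hv, inner_sub_right, inner_smul_right, haa, mul_one, hγ, sub_self]
  have hvv : ⟪v, v⟫_ℂ = ((1 - ‖γ‖ ^ 2 : ℝ) : ℂ) := by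
    have hba : ⟪b, a⟫_ℂ = (starRingEnd ℂ) γ := by rw [hγ, ← inner_conj_symm]
    simp only [hv, inner_sub_left, inner_sub_right, inner_smul_left, inner_smul_right,
      haa, hbb, hba, mul_one]
    rw [Complex.sq_norm]
    push_cast
    rw [← Complex.normSq_eq_conj_mul_self]
    push_cast [Complex.normSq_eq_conj_mul_self]
    ring
  have hnv : ‖v‖ ^ 2 = 1 - ‖γ‖ ^ 2 := by
    have := inner_self_eq_norm_sq (𝕜 := ℂ) v
    rw [hvv] at this; simpa [← Complex.ofReal_pow] using this.symm
  have hsqrt : Real.sqrt (1 - ‖γ‖ ^ 2) = ‖v‖ := by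
    rw [← hnv, Real.sqrt_sq (norm_nonneg v)]
  by_cases hv0 : v = 0
  · have hb' : b = γ • a := by
      have := sub_eq_zero.mp hv0; linear_combination (norm := module) this
    have habs : ‖γ‖ = 1 := by
      have := congrArg norm hb'
      rw [norm_smul, ha, hb, mul_one] at this
      simpa using this.symm
    have horth : Orthonormal ℂ (Set.restrict {(0 : Fin (N+2))} (fun _ => a)) := by
      rw [orthonormal_iff_ite]
      rintro ⟨i, hi⟩ ⟨j, hj⟩
      simp only [Set.mem_singleton_iff] at hi hj
      subst hi; subst hj
      simp [Set.restrict, haa, ha]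
    obtain ⟨B, hB⟩ := horth.exists_orthonormalBasis_extension_of_card_eq (by simp)
    have hB0 : B 0 = a := hB 0 (Set.mem_singleton _)
    refine ⟨B, ?_, ?_⟩
    · intro j
      rw [← hB0, B.repr_self]
      simp [EuclideanSpace.single_apply, eq_comm]
    · intro j
      rw [hb', ← hB0]
      simp only [_root_.map_smul, B.repr_self]
      rcases eq_or_ne j 0 with rfl | hj0
      · simp [EuclideanSpace.single_apply]
      · rcases eq_or_ne j 1 with rfl | hj1
        · simp [EuclideanSpace.single_apply, h01.symm, habs]
        · simp [EuclideanSpace.single_apply, hj0, hj1, eq_comm]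
  · have hnvpos : (0:ℝ) < ‖v‖ := norm_pos_iff.mpr hv0
    set w : EuclideanSpace ℂ (Fin (N+2)) := ((‖v‖ : ℂ))⁻¹ • v with hw
    have hnw : ‖w‖ = 1 := by
      rw [hw, norm_smul, norm_inv, Complex.norm_real, Real.norm_eq_abs,
        abs_of_nonneg (norm_nonneg v)]
      field_simp
    have hww : ⟪w, w⟫_ℂ = 1 := by
      rw [inner_self_eq_norm_sq_to_K, hnw]; norm_num
    have haw : ⟪a, w⟫_ℂ = 0 := by rw [hw, inner_smul_right, hav, mul_zero]
    have hwa : ⟪w, a⟫_ℂ = 0 := by rw [← inner_conj_symm, haw, map_zero]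
    have horth : Orthonormal ℂ
        (Set.restrict {(0 : Fin (N+2)), 1} (fun j => if j = 0 then a else w)) := by
      rw [orthonormal_iff_ite]
      rintro ⟨i, hi⟩ ⟨j, hj⟩
      simp only [Set.mem_insert_iff, Set.mem_singleton_iff] at hi hj
      have hij : (⟨i, by simp [hi]⟩ : ({(0 : Fin (N+2)), 1} : Set _)) = ⟨j, by simp [hj]⟩ ↔ i = j :=
        Subtype.ext_iff
      rcases hi with rfl | rfl <;> rcases hj with rfl | rfl <;>
        simp [hij, haa, hww, haw, hwa, h01, h01.symm, Set.restrict, ha, hnw]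
    obtain ⟨B, hB⟩ := horth.exists_orthonormalBasis_extension_of_card_eq (by simp)
    have hB0 : B 0 = a := by simpa using hB 0 (by simp)
    have hB1 : B 1 = w := by
      have := hB 1 (by simp)
      simpa [h01.symm] using this
    have hbrepr : b = γ • B 0 + ((‖v‖ : ℂ)) • B 1 := by
      rw [hB0, hB1, hw, smul_smul]
      rw [mul_inv_cancel₀ (by exact_mod_cast hnvpos.ne')]
      rw [one_smul, hv]
      module
    refine ⟨B, ?_, ?_⟩
    · intro j
      rw [← hB0, B.repr_self]
      simp [EuclideanSpace.single_apply, eq_comm]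
    · intro j
      rw [hbrepr]
      simp only [map_add, _root_.map_smul, B.repr_self]
      rcases eq_or_ne j 0 with rfl | hj0
      · simp [EuclideanSpace.single_apply, h01, h01.symm]
      · rcases eq_or_ne j 1 with rfl | hj1
        · simp [EuclideanSpace.single_apply, h01, h01.symm, hsqrt]
        · simp [EuclideanSpace.single_apply, hj0, hj1, eq_comm]

lemma basis_complete {n : ℕ} (B : OrthonormalBasis (Fin n) ℂ (EuclideanSpace ℂ (Fin n)))
    (k l : Fin n) :
    ∑ j, B j k * (starRingEnd ℂ) (B j l) = if k = l then 1 else 0 := by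
  have h := B.sum_inner_mul_inner (EuclideanSpace.single k (1:ℂ))
    (EuclideanSpace.single l (1:ℂ))
  simp only [EuclideanSpace.inner_single_left, EuclideanSpace.inner_single_right,
    RingHom.map_one, one_mul, EuclideanSpace.single_apply, apply_ite (starRingEnd ℂ),
    RingHom.map_zero] at h
  rw [h]
  simp [eq_comm]


/-- every sector-preserving channel of type `(d,1,1)` has Kraus operators
of the form `C i ⊕ α i ⊕ β i` with `∑|α i|² = ∑|β i|² = 1` and `(C i)` a Kraus
representation of a channel on `ℂ^d`; moreover it admits a canonical Kraus
representation `C' 0 ⊕ 1 ⊕ γ`, `C' 1 ⊕ 0 ⊕ √(1−|γ|²)`, `C' j ⊕ 0 ⊕ 0` (j ≥ 2),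
with `|γ| ≤ 1`. -/
theorem sector_preserving_d11_structure {d N : ℕ}
    (L : Fin N → Matrix (Fin d ⊕ (Unit ⊕ Unit)) (Fin d ⊕ (Unit ⊕ Unit)) ℂ)
    (hL : ∑ k, (L k)ᴴ * L k = 1)
    (hsect0 : ∀ ρd : Matrix (Fin d) (Fin d) ℂ, ∃ σd,
      ∑ k, L k * Matrix.fromBlocks ρd 0 0 0 * (L k)ᴴ = Matrix.fromBlocks σd 0 0 0)
    (hsect1 : ∀ ρ₁ : Matrix Unit Unit ℂ, ∃ σ₁,
      ∑ k, L k * Matrix.fromBlocks 0 0 0 (Matrix.fromBlocks ρ₁ 0 0 0) * (L k)ᴴ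
        = Matrix.fromBlocks 0 0 0 (Matrix.fromBlocks σ₁ 0 0 0))
    (hsect2 : ∀ ρ₂ : Matrix Unit Unit ℂ, ∃ σ₂,
      ∑ k, L k * Matrix.fromBlocks 0 0 0 (Matrix.fromBlocks 0 0 0 ρ₂) * (L k)ᴴ
        = Matrix.fromBlocks 0 0 0 (Matrix.fromBlocks 0 0 0 σ₂)) :
    (∃ (n : ℕ) (C : Fin n → Matrix (Fin d) (Fin d) ℂ) (α β : Fin n → ℂ),
      (∑ i, (C i)ᴴ * C i = 1) ∧
      (∑ i, ‖α i‖ ^ 2 = (1:ℝ)) ∧ (∑ i, ‖β i‖ ^ 2 = (1:ℝ)) ∧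
      ∀ ρ, ∑ k, L k * ρ * (L k)ᴴ
          = ∑ i, sect2Op (C i) (α i) (β i) * ρ * (sect2Op (C i) (α i) (β i))ᴴ) ∧
    (∃ (n' : ℕ) (C' : Fin (n'+2) → Matrix (Fin d) (Fin d) ℂ) (γ : ℂ),
      ‖γ‖ ≤ 1 ∧
      (∑ j, (C' j)ᴴ * C' j = 1) ∧
      ∀ ρ, ∑ k, L k * ρ * (L k)ᴴ
          = ∑ j, sect2Op (C' j) (if j = 0 then (1:ℂ) else 0)
                  (if j = 0 then γ
                   else if j = 1 then (↑(Real.sqrt (1 - ‖γ‖ ^ 2)) : ℂ) else 0)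
              * ρ
              * (sect2Op (C' j) (if j = 0 then (1:ℂ) else 0)
                  (if j = 0 then γ
                   else if j = 1 then (↑(Real.sqrt (1 - ‖γ‖ ^ 2)) : ℂ) else 0))ᴴ) := by
  classical
  set C : Fin N → Matrix (Fin d) (Fin d) ℂ :=
    fun k => Matrix.of fun i j => L k (Sum.inl i) (Sum.inl j) with hCdef
  set α : Fin N → ℂ := fun k => L k (Sum.inr (Sum.inl ())) (Sum.inr (Sum.inl ())) with hαdef
  set β : Fin N → ℂ := fun k => L k (Sum.inr (Sum.inr ())) (Sum.inr (Sum.inr ())) with hβdef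
  have hLk : ∀ k, L k = sect2Op (C k) (α k) (β k) := blockDiag L hsect0 hsect1 hsect2
  have hsum : sect2Op (∑ k, (C k)ᴴ * C k) (∑ k, (starRingEnd ℂ) (α k) * α k)
      (∑ k, (starRingEnd ℂ) (β k) * β k) = 1 := by
    rw [← sect2Op_sum, ← hL]
    refine (Finset.sum_congr rfl fun k _ => ?_).symm
    rw [hLk k, sect2Op_conjTranspose, sect2Op_mul]
  obtain ⟨hC1, hα1, hβ1⟩ := sect2Op_eq_one_iff.mp hsum
  have key : ∀ g : Fin N → ℂ, (∑ k, (starRingEnd ℂ) (g k) * g k = 1) →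
      ∑ k, ‖g k‖ ^ 2 = (1:ℝ) := by
    intro g hg
    have : ((∑ k, ‖g k‖ ^ 2 : ℝ) : ℂ) = 1 := by
      push_cast
      rw [← hg]
      exact Finset.sum_congr rfl fun k _ => by
        rw [RCLike.conj_mul]; norm_cast
    exact_mod_cast this
  have hαsum := key α hα1
  have hβsum := key β hβ1
  constructor
  · exact ⟨N, C, α, β, hC1, hαsum, hβsum, fun ρ =>
      Finset.sum_congr rfl fun k _ => by rw [hLk k]⟩
  · -- canonical form
    set Ct : Fin (N+2) → Matrix (Fin d) (Fin d) ℂ :=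
      fun j => if h : (j:ℕ) < N then C ⟨j, h⟩ else 0 with hCt
    set αt : Fin (N+2) → ℂ := fun j => if h : (j:ℕ) < N then α ⟨j, h⟩ else 0 with hαt
    set βt : Fin (N+2) → ℂ := fun j => if h : (j:ℕ) < N then β ⟨j, h⟩ else 0 with hβt
    set Lt : Fin (N+2) → Matrix (Fin d ⊕ (Unit ⊕ Unit)) (Fin d ⊕ (Unit ⊕ Unit)) ℂ :=
      fun j => if h : (j:ℕ) < N then L ⟨j, h⟩ else 0 with hLtdef
    have hLt : ∀ j, Lt j = sect2Op (Ct j) (αt j) (βt j) := by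
      intro j
      by_cases h : (j:ℕ) < N
      · simp only [hLtdef, hCt, hαt, hβt, dif_pos h]
        exact hLk _
      · simp only [hLtdef, hCt, hαt, hβt, dif_neg h]
        exact sect2Op_zero.symm
    set a : EuclideanSpace ℂ (Fin (N+2)) := (WithLp.equiv 2 (Fin (N+2) → ℂ)).symm αt with hadef
    set b : EuclideanSpace ℂ (Fin (N+2)) := (WithLp.equiv 2 (Fin (N+2) → ℂ)).symm βt with hbdef
    have hnorm1 : ∀ (g : Fin (N+2) → ℂ), (∑ j, ‖g j‖ ^ 2 = (1:ℝ)) →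
        ‖(WithLp.equiv 2 (Fin (N+2) → ℂ)).symm g‖ = 1 := by
      intro g hg
      rw [EuclideanSpace.norm_eq]
      have : ∀ j, ‖(WithLp.equiv 2 (Fin (N+2) → ℂ)).symm g j‖ ^ 2 = ‖g j‖ ^ 2 := fun j => rfl
      rw [Finset.sum_congr rfl fun j _ => this j, hg, Real.sqrt_one]
    have hpad : ∀ (g : Fin N → ℂ) j, ‖(if h : ((j : Fin (N+2)):ℕ) < N then g ⟨j, h⟩ else 0)‖ ^ 2
        = if h : ((j : Fin (N+2)):ℕ) < N then ‖g ⟨j, h⟩‖ ^ 2 else 0 := by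
      intro g j
      by_cases h : ((j : Fin (N+2)):ℕ) < N <;> simp [h]
    have ha : ‖a‖ = 1 := by
      refine hnorm1 αt ?_
      rw [hαt]
      calc ∑ j : Fin (N+2), ‖if h : (j:ℕ) < N then α ⟨j, h⟩ else 0‖ ^ 2
          = ∑ j : Fin (N+2), (if h : (j:ℕ) < N then ‖α ⟨j, h⟩‖ ^ 2 else 0) :=
            Finset.sum_congr rfl fun j _ => hpad α j
        _ = ∑ k, ‖α k‖ ^ 2 := sum_pad (fun k => ‖α k‖ ^ 2)
        _ = 1 := hαsum
    have hb : ‖b‖ = 1 := by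
      refine hnorm1 βt ?_
      rw [hβt]
      calc ∑ j : Fin (N+2), ‖if h : (j:ℕ) < N then β ⟨j, h⟩ else 0‖ ^ 2
          = ∑ j : Fin (N+2), (if h : (j:ℕ) < N then ‖β ⟨j, h⟩‖ ^ 2 else 0) :=
            Finset.sum_congr rfl fun j _ => hpad β j
        _ = ∑ k, ‖β k‖ ^ 2 := sum_pad (fun k => ‖β k‖ ^ 2)
        _ = 1 := hβsum
    set γ : ℂ := ⟪a, b⟫_ℂ with hγdef
    have habs : ‖γ‖ ≤ 1 := by
      calc ‖γ‖ ≤ ‖a‖ * ‖b‖ := norm_inner_le_norm a b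
        _ = 1 := by rw [ha, hb, mul_one]
    obtain ⟨B, hBa, hBb⟩ := gram_pair_basis a b ha hb
    set C' : Fin (N+2) → Matrix (Fin d) (Fin d) ℂ :=
      fun j => ∑ k, (starRingEnd ℂ) (B j k) • Ct k with hC'
    set α' : Fin (N+2) → ℂ := fun j => ∑ k, (starRingEnd ℂ) (B j k) * αt k with hα'def
    set β' : Fin (N+2) → ℂ := fun j => ∑ k, (starRingEnd ℂ) (B j k) * βt k with hβ'def
    have hWV1 : ∀ k l, ∑ j, (starRingEnd ℂ) (B j k) * B j l = if k = l then 1 else 0 := by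
      intro k l
      calc ∑ j, (starRingEnd ℂ) (B j k) * B j l = ∑ j, B j l * (starRingEnd ℂ) (B j k) :=
            Finset.sum_congr rfl fun j _ => mul_comm _ _
        _ = if l = k then 1 else 0 := basis_complete B l k
        _ = if k = l then 1 else 0 := by simp [eq_comm]
    have hWV2 : ∀ k l, ∑ j, B j k * (starRingEnd ℂ) (B j l) = if k = l then 1 else 0 :=
      basis_complete B
    have hrepr : ∀ (g : Fin (N+2) → ℂ) (j : Fin (N+2)),
        ∑ k, (starRingEnd ℂ) (B j k) * g k
          = B.repr ((WithLp.equiv 2 (Fin (N+2) → ℂ)).symm g) j := by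
      intro g j
      rw [B.repr_apply_apply, PiLp.inner_apply]
      refine Finset.sum_congr rfl fun k _ => ?_
      simp [mul_comm]
    have hα' : ∀ j, α' j = if j = 0 then 1 else 0 := by
      intro j
      rw [hα'def]
      exact (hrepr αt j).trans (hBa j)
    have hβ' : ∀ j, β' j = if j = 0 then γ
        else if j = 1 then ((Real.sqrt (1 - ‖γ‖ ^ 2) : ℝ) : ℂ) else 0 := by
      intro j
      rw [hβ'def]
      exact (hrepr βt j).trans (hBb j)
    have hL' : ∀ j, sect2Op (C' j) (α' j) (β' j)
        = ∑ k, (starRingEnd ℂ) (B j k) • Lt k := by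
      intro j
      have h2 : ∑ k, (starRingEnd ℂ) (B j k) • Lt k
          = sect2Op (C' j) (α' j) (β' j) := by
        calc ∑ k, (starRingEnd ℂ) (B j k) • Lt k
            = ∑ k, sect2Op ((starRingEnd ℂ) (B j k) • Ct k)
                ((starRingEnd ℂ) (B j k) * αt k) ((starRingEnd ℂ) (B j k) * βt k) :=
              Finset.sum_congr rfl fun k _ => by rw [hLt k, sect2Op_smul]
          _ = sect2Op (C' j) (α' j) (β' j) := by
              rw [sect2Op_sum, hC', hα'def, hβ'def]
      exact h2.symm
    have hC'H : ∀ j, (C' j)ᴴ = ∑ k, B j k • (Ct k)ᴴ := by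
      intro j
      rw [hC']
      simp [Matrix.conjTranspose_sum, Matrix.conjTranspose_smul]
    have hcomp : ∑ j, (C' j)ᴴ * C' j = 1 := by
      calc ∑ j, (C' j)ᴴ * C' j
          = ∑ j, (∑ k, B j k • (Ct k)ᴴ) * (∑ l, (starRingEnd ℂ) (B j l) • Ct l) := by
            refine Finset.sum_congr rfl fun j _ => ?_
            rw [hC'H j, hC']
        _ = ∑ k, (Ct k)ᴴ * Ct k :=
            mix_core (Matrix.of fun j k => B j k) (Matrix.of fun j l => (starRingEnd ℂ) (B j l))
              hWV2 (fun k => (Ct k)ᴴ) Ct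
        _ = ∑ k : Fin (N+2), (if h : (k:ℕ) < N then (fun i => (C i)ᴴ * C i) ⟨k, h⟩ else 0) := by
            refine Finset.sum_congr rfl fun k _ => ?_
            by_cases h : (k:ℕ) < N <;> simp [hCt, h]
        _ = ∑ k, (C k)ᴴ * C k := sum_pad (fun i => (C i)ᴴ * C i)
        _ = 1 := hC1
    refine ⟨N, C', γ, habs, hcomp, ?_⟩
    intro ρ
    have step1 : ∑ k, L k * ρ * (L k)ᴴ = ∑ j : Fin (N+2), Lt j * ρ * (Lt j)ᴴ := by
      rw [← sum_pad (fun k => L k * ρ * (L k)ᴴ)]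
      refine Finset.sum_congr rfl fun j _ => ?_
      by_cases h : (j:ℕ) < N <;> simp [hLtdef, h]
    have step2 : ∑ j : Fin (N+2),
        (∑ k, (starRingEnd ℂ) (B j k) • (Lt k * ρ)) * (∑ l, B j l • (Lt l)ᴴ)
          = ∑ k : Fin (N+2), Lt k * ρ * (Lt k)ᴴ :=
      mix_core (Matrix.of fun j k => (starRingEnd ℂ) (B j k)) (Matrix.of fun j l => B j l)
        hWV1 (fun k => Lt k * ρ) (fun l => (Lt l)ᴴ)
    have step3 : ∀ j, sect2Op (C' j) (α' j) (β' j) * ρ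
        = ∑ k, (starRingEnd ℂ) (B j k) • (Lt k * ρ) := by
      intro j
      rw [hL' j, Finset.sum_mul]
      exact Finset.sum_congr rfl fun k _ => smul_mul_assoc _ _ _
    have step4 : ∀ j, (sect2Op (C' j) (α' j) (β' j))ᴴ = ∑ l, B j l • (Lt l)ᴴ := by
      intro j
      rw [hL' j, Matrix.conjTranspose_sum]
      refine Finset.sum_congr rfl fun l _ => ?_
      rw [Matrix.conjTranspose_smul]
      simp
    calc ∑ k, L k * ρ * (L k)ᴴ = ∑ k : Fin (N+2), Lt k * ρ * (Lt k)ᴴ := step1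
      _ = ∑ j : Fin (N+2),
            (∑ k, (starRingEnd ℂ) (B j k) • (Lt k * ρ)) * (∑ l, B j l • (Lt l)ᴴ) := step2.symm
      _ = ∑ j, sect2Op (C' j) (α' j) (β' j) * ρ * (sect2Op (C' j) (α' j) (β' j))ᴴ := by
          refine Finset.sum_congr rfl fun j _ => ?_
          rw [step3 j, step4 j]
      _ = ∑ j, sect2Op (C' j) (if j = 0 then (1:ℂ) else 0)
              (if j = 0 then γ
               else if j = 1 then (↑(Real.sqrt (1 - ‖γ‖ ^ 2)) : ℂ) else 0)
            * ρ
            * (sect2Op (C' j) (if j = 0 then (1:ℂ) else 0)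
              (if j = 0 then γ
               else if j = 1 then (↑(Real.sqrt (1 - ‖γ‖ ^ 2)) : ℂ) else 0))ᴴ := by
          refine Finset.sum_congr rfl fun j _ => ?_
          rw [hα' j, hβ' j]
end
end
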